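/- arXiv:2206.00579 — 6 statements merged into one kernel-verified Lean document; each statement's English description precedes it below -/
import Mathlib

section
/- Let f : ℝ → ℝ be a 1-periodic function taking only the values −1 and +1, having only finitely many discontinuities in [0,1), and satisfying ∫₀¹ f(x) dx = 0. Then there exist T > 0 and continuous functions a, b : [0,T] → ℝ such that a(0) = b(0), a(t) ≤ b(t) ≤ a(t) + 1 for all t ∈ [0,T], ∫_{a(t)}^{b(t)} f(x) dx = 0 for all t ∈ [0,T], and b(T) = a(T) + 1. -/
/-!
Put `F x = ∫₀ˣ f`. Then `F` is continuous and `1`-periodic, and it is a zigzag: affine with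
slope `±1` between consecutive points of a locally finite periodic set `S` containing the
discontinuities of `f`. Choose a global minimum `q` and a global maximum `r ∈ (q, q + 1)` of `F`.
An arc `[a, b]` has integral zero iff `F a = F b`, so it suffices to join `(q, q)` to `(r - 1, r)`
inside `{(a, b) ∈ [r - 1, q] × [q, r] | F a = F b}`: two climbers leave the valley floor `q` and
reach the peaks `r - 1` and `r` while staying at equal heights.

The climbers move at unit speed, and between two events (a climber reaching a point of `S`) the
joint motion is a straight segment. At an event they choose new directions by a fixed local rule.
The number of admissible direction pairs at a point of the square is never `3`, and is `1` only at
the two corners `(q, q)` and `(r - 1, r)`; this makes the resulting dynamics reversible on a finite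
state space. Running it from `(q, q)`, the orbit returns to its start, and reading the periodic orbit
backwards shows that it turns around somewhere; the only turning point other than `(q, q)` is the
goal corner.
-/

open Set Function
open scoped Finset

theorem exists_turn_of_reversible {α : Type*} {V : Set α} {T R : α → α} {s₀ : α}
    (hV : V.Finite) (h₀ : s₀ ∈ V) (hT : MapsTo T V V) (hRR : ∀ s ∈ V, R (R s) = s)
    (hR : ∀ s, R s ≠ s) (hTRT : ∀ s ∈ V, T (R (T s)) = R s)
    (hstart : ∀ s ∈ V, T s = s₀ → R s = s₀) :
    ∃ n, T (T^[n] s₀) = R (T^[n] s₀) ∧ T (T^[n] s₀) ≠ s₀ := by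
  have horbit : ∀ n, T^[n] s₀ ∈ V := fun n => hT.iterate n h₀
  have hinj : InjOn T V := fun s hs s' hs' h => by
    rw [← hRR s hs, ← hRR s' hs', ← hTRT s hs, ← hTRT s' hs', h]
  have hper : s₀ ∈ periodicPts T := by
    obtain ⟨a, b, hab, heq⟩ := hV.exists_lt_map_eq_of_forall_mem horbit
    obtain ⟨c, rfl⟩ := Nat.exists_eq_add_of_le hab.le
    refine mk_mem_periodicPts (n := c) (by omega) ?_
    rw [iterate_add_apply] at heq
    exact ((hinj.iterate hT a) h₀ (horbit _) heq).symm
  set p := minimalPeriod T s₀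
  have hp : 0 < p := minimalPeriod_pos_of_mem_periodicPts hper
  have hpal : ∀ k ≤ p - 1, T^[k] s₀ = R (T^[p - 1 - k] s₀) := by
    intro k
    induction k with
    | zero =>
      intro _
      refine (hstart _ (horbit _) ?_).symm
      rw [← iterate_succ_apply' T, Nat.sub_zero, Nat.succ_eq_add_one, Nat.sub_add_cancel hp,
        iterate_minimalPeriod]
    | succ k ih =>
      intro hk
      have hsplit : p - 1 - k = (p - 1 - (k + 1)) + 1 := by omega
      rw [iterate_succ_apply', ih (by omega), hsplit, iterate_succ_apply', hTRT _ (horbit _)]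
  obtain ⟨k, hk | hk⟩ := Nat.even_or_odd' (p - 1)
  · have := hpal k (by omega)
    rw [show p - 1 - k = k by omega] at this
    exact absurd this.symm (hR _)
  · refine ⟨k, ?_, ?_⟩
    · rw [← iterate_succ_apply' T, hpal (k + 1) (by omega), show p - 1 - (k + 1) = k by omega]
    · rw [← iterate_succ_apply' T]
      exact not_isPeriodicPt_of_pos_of_lt_minimalPeriod (n := k + 1) (by omega) (by omega)

lemma finite_inter_Icc_of_periodic {S : Set ℝ} (hS : Periodic (· ∈ S) 1)
    (hfin : (S ∩ Ico 0 1).Finite) (x y : ℝ) : (S ∩ Icc x y).Finite := by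
  refine ((hfin.prod (finite_Icc ⌊x⌋ ⌊y⌋)).image fun z : ℝ × ℤ => z.1 + z.2).subset ?_
  rintro z ⟨hz, hzx, hzy⟩
  have hfract : (Int.fract z ∈ S) = (z ∈ S) := by
    simpa [Int.self_sub_floor] using hS.sub_int_mul_eq (x := z) ⌊z⌋
  exact ⟨(Int.fract z, ⌊z⌋), ⟨⟨hfract ▸ hz, Int.fract_nonneg z, Int.fract_lt_one z⟩,
    Int.floor_mono hzx, Int.floor_mono hzy⟩, Int.fract_add_floor z⟩

lemma countable_of_finite_inter_Icc {S : Set ℝ} (hS : ∀ x y, (S ∩ Icc x y).Finite) :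
    S.Countable := by
  refine (countable_iUnion fun n : ℤ => (hS n (n + 1)).countable).mono fun x hx => ?_
  exact mem_iUnion.2 ⟨⌊x⌋, hx, Int.floor_le x, (Int.lt_floor_add_one x).le⟩

lemma periodic_setOf_not_continuousAt {f : ℝ → ℝ} (hf : Periodic f 1) :
    Periodic (· ∈ {x | ¬ContinuousAt f x}) 1 := fun x => by
  have := (Homeomorph.addRight (1 : ℝ)).comp_continuousAt_iff' f x
  rw [show f ∘ Homeomorph.addRight 1 = f from funext hf] at this
  simp [this]

lemma intervalIntegrable_of_countable_not_continuousAt {f : ℝ → ℝ} {C : ℝ}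
    (hC : ∀ x, |f x| ≤ C) (hD : {x | ¬ContinuousAt f x}.Countable) (a b : ℝ) :
    IntervalIntegrable f MeasureTheory.volume a b := by
  have hmeas : MeasureTheory.AEStronglyMeasurable f MeasureTheory.volume := by
    have := ContinuousOn.aestronglyMeasurable (μ := MeasureTheory.volume)
      (fun x hx => (not_not.1 hx).continuousWithinAt) hD.measurableSet.compl
    rwa [MeasureTheory.Measure.restrict_eq_self_of_ae_mem
      (show ∀ᵐ x, x ∈ {x | ¬ContinuousAt f x}ᶜ from
        MeasureTheory.measure_eq_zero_iff_ae_notMem.1 (hD.measure_zero _))] at this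
  exact (intervalIntegrable_const (c := C)).mono_fun' hmeas.restrict
    (Filter.Eventually.of_forall hC)

lemma JoinedIn.exists_continuous_coord {G : Set (ℝ × ℝ)} {x y : ℝ × ℝ} (h : JoinedIn G x y) :
    ∃ a b : ℝ → ℝ, Continuous a ∧ Continuous b ∧ (a 0, b 0) = x ∧ (a 1, b 1) = y ∧
      ∀ t ∈ Icc (0 : ℝ) 1, (a t, b t) ∈ G :=
  ⟨fun t => (h.somePath.extend t).1, fun t => (h.somePath.extend t).2,
    by fun_prop, by fun_prop, by simp, by simp, fun t ht => by simp [h.somePath.extend_apply ht]⟩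

namespace MountainClimbing

noncomputable section

def sgn (e : Bool) : ℝ := cond e 1 (-1)

@[simp] lemma sgn_true : sgn true = 1 := rfl

@[simp] lemma sgn_false : sgn false = -1 := rfl

@[simp] lemma sgn_not (e : Bool) : sgn (!e) = -sgn e := by cases e <;> simp

lemma sgn_mul_self (e : Bool) : sgn e * sgn e = 1 := by cases e <;> simp

structure Zigzag (F : ℝ → ℝ) (S : Set ℝ) : Prop where
  finite_inter_Icc : ∀ x y, (S ∩ Icc x y).Finite
  exists_gt : ∀ x, ∃ y ∈ S, x < y
  exists_lt : ∀ x, ∃ y ∈ S, y < x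
  affine : ∀ x y, x < y → Disjoint S (Ioo x y) →
    ∃ c, |c| = 1 ∧ ∀ z ∈ Icc x y, F z = F x + c * (z - x)

def gap (S : Set ℝ) (x : ℝ) (e : Bool) : ℝ := sInf {d | 0 < d ∧ x + sgn e * d ∈ S}

def rate (F : ℝ → ℝ) (S : Set ℝ) (x : ℝ) (e : Bool) : ℝ :=
  (F (x + sgn e * gap S x e) - F x) / gap S x e

def canMove (lo hi x : ℝ) (e : Bool) : Bool := cond e (decide (x < hi)) (decide (lo < x))

section CanMove

variable {lo hi x : ℝ}

lemma canMove_true_or_false (hlohi : lo < hi) (hx : x ∈ Icc lo hi) :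
    canMove lo hi x true || canMove lo hi x false := by
  rcases hx.1.lt_or_eq with h | rfl
  · simp [canMove, h]
  · simp [canMove, hlohi]

lemma eq_hi_of_canMove_true (hx : x ∈ Icc lo hi) (h : canMove lo hi x true = false) : x = hi :=
  le_antisymm hx.2 (by simpa [canMove] using h)

lemma eq_lo_of_canMove_false (hx : x ∈ Icc lo hi) (h : canMove lo hi x false = false) : x = lo :=
  le_antisymm (by simpa [canMove] using h) hx.1

lemma canMove_back (hx : x ∈ Icc lo hi) {t : ℝ} (ht : 0 < t) (e : Bool) :
    canMove lo hi (x + sgn e * t) (!e) := by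
  cases e <;> simp [canMove] <;> linarith [hx.1, hx.2]

end CanMove

namespace Zigzag

variable {F : ℝ → ℝ} {S : Set ℝ} (h : Zigzag F S) {x : ℝ} {e : Bool}
include h

lemma union_finite {T : Set ℝ} (hT : T.Finite) : Zigzag F (S ∪ T) where
  finite_inter_Icc x y := ((h.finite_inter_Icc x y).union hT).subset fun _ ⟨hz, hzI⟩ =>
    hz.imp (fun hz => ⟨hz, hzI⟩) id
  exists_gt x := let ⟨y, hy, hxy⟩ := h.exists_gt x; ⟨y, Or.inl hy, hxy⟩
  exists_lt x := let ⟨y, hy, hyx⟩ := h.exists_lt x; ⟨y, Or.inl hy, hyx⟩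
  affine x y hxy hS := h.affine x y hxy (hS.mono_left subset_union_left)

lemma exists_pos_mem (x : ℝ) (e : Bool) : ∃ d, 0 < d ∧ x + sgn e * d ∈ S := by
  cases e
  · obtain ⟨y, hy, hyx⟩ := h.exists_lt x
    exact ⟨x - y, by linarith, by simpa using hy⟩
  · obtain ⟨y, hy, hxy⟩ := h.exists_gt x
    exact ⟨y - x, by linarith, by simpa using hy⟩

lemma isLeast_gap (x : ℝ) (e : Bool) : IsLeast {d | 0 < d ∧ x + sgn e * d ∈ S} (gap S x e) := by
  obtain ⟨d₀, hd₀, hd₀S⟩ := h.exists_pos_mem x e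
  set C := {d | 0 < d ∧ x + sgn e * d ∈ S}
  have hfin : (C ∩ Iic d₀).Finite := by
    refine ((h.finite_inter_Icc (x - d₀) (x + d₀)).image fun y => sgn e * (y - x)).subset ?_
    rintro d ⟨⟨hd, hdS⟩, hdd₀ : d ≤ d₀⟩
    refine ⟨x + sgn e * d, ⟨hdS, ?_⟩, show sgn e * (x + sgn e * d - x) = d by
      rw [add_sub_cancel_left, ← mul_assoc, sgn_mul_self, one_mul]⟩
    cases e <;> constructor <;> simp only [sgn_true, sgn_false] <;> linarith
  obtain ⟨d₁, hd₁, hmin⟩ := exists_min_image _ id hfin ⟨d₀, ⟨hd₀, hd₀S⟩, mem_Iic.2 le_rfl⟩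
  have hleast : IsLeast C d₁ := ⟨hd₁.1, fun d hd =>
    (le_total d d₀).elim (fun hle => hmin d ⟨hd, hle⟩) fun hle => hd₁.2.trans hle⟩
  rwa [gap, hleast.csInf_eq]

lemma gap_pos (x : ℝ) (e : Bool) : 0 < gap S x e := (h.isLeast_gap x e).1.1

lemma add_gap_mem (x : ℝ) (e : Bool) : x + sgn e * gap S x e ∈ S := (h.isLeast_gap x e).1.2

lemma gap_le {d : ℝ} (hd : 0 < d) (hdS : x + sgn e * d ∈ S) : gap S x e ≤ d :=
  (h.isLeast_gap x e).2 ⟨hd, hdS⟩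

lemma notMem_of_lt_gap {d : ℝ} (hd : 0 < d) (hdg : d < gap S x e) : x + sgn e * d ∉ S :=
  fun hdS => (h.gap_le hd hdS).not_gt hdg

lemma exists_slope (x : ℝ) (e : Bool) :
    ∃ c, |c| = 1 ∧ ∀ s ∈ Icc 0 (gap S x e), F (x + sgn e * s) = F x + c * s := by
  have hg := h.gap_pos x e
  cases e
  · obtain ⟨c, hc, hF⟩ := h.affine (x - gap S x false) x (by linarith) <|
      disjoint_left.2 fun y hyS hy => h.notMem_of_lt_gap (d := x - y) (by linarith [hy.2])
        (by linarith [hy.1]) (by simpa using hyS)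
    refine ⟨-c, by rwa [abs_neg], fun s hs => ?_⟩
    have hx := hF x ⟨by linarith, le_rfl⟩
    have hs' := hF (x - s) ⟨by linarith [hs.2], by linarith [hs.1]⟩
    simp only [sgn_false, neg_mul, one_mul, ← sub_eq_add_neg]
    linarith
  · obtain ⟨c, hc, hF⟩ := h.affine x (x + gap S x true) (by linarith) <|
      disjoint_left.2 fun y hyS hy => h.notMem_of_lt_gap (d := y - x) (by linarith [hy.1])
        (by linarith [hy.2]) (by simpa using hyS)
    refine ⟨c, hc, fun s hs => ?_⟩
    simpa using hF (x + s) ⟨by linarith [hs.1], by linarith [hs.2]⟩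

lemma rate_spec (x : ℝ) (e : Bool) : |rate F S x e| = 1 ∧
    ∀ s ∈ Icc 0 (gap S x e), F (x + sgn e * s) = F x + rate F S x e * s := by
  obtain ⟨c, hc, hF⟩ := h.exists_slope x e
  have hg := h.gap_pos x e
  have hrate : rate F S x e = c := by
    rw [rate, hF _ ⟨hg.le, le_rfl⟩, add_sub_cancel_left, mul_div_cancel_right₀ _ hg.ne']
  exact hrate ▸ ⟨hc, hF⟩

lemma map_add_sgn_mul {s : ℝ} (hs : s ∈ Icc 0 (gap S x e)) :
    F (x + sgn e * s) = F x + rate F S x e * s :=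
  (h.rate_spec x e).2 s hs

lemma rate_eq_one_or (x : ℝ) (e : Bool) : rate F S x e = 1 ∨ rate F S x e = -1 :=
  (abs_eq zero_le_one).1 (h.rate_spec x e).1

lemma le_gap_back {t : ℝ} (htg : t ≤ gap S x e) : t ≤ gap S (x + sgn e * t) (!e) := by
  by_contra! hlt
  have hg := h.gap_pos (x + sgn e * t) (!e)
  refine h.notMem_of_lt_gap (x := x) (e := e) (d := t - gap S (x + sgn e * t) (!e))
    (by linarith) (by linarith) ?_
  convert h.add_gap_mem (x + sgn e * t) (!e) using 1
  rw [sgn_not]; ring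

lemma gap_back_le {t : ℝ} (ht : 0 < t) (hx : x ∈ S) : gap S (x + sgn e * t) (!e) ≤ t :=
  h.gap_le ht (by rwa [sgn_not, neg_mul, add_neg_cancel_right])

lemma rate_back {t : ℝ} (ht : 0 < t) (htg : t ≤ gap S x e) :
    rate F S (x + sgn e * t) (!e) = -rate F S x e := by
  have hback := h.map_add_sgn_mul ⟨ht.le, h.le_gap_back htg⟩
  rw [sgn_not, neg_mul, add_neg_cancel_right, h.map_add_sgn_mul ⟨ht.le, htg⟩] at hback
  have : (rate F S (x + sgn e * t) (!e) + rate F S x e) * t = 0 := by linarith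
  linarith [(mul_eq_zero.1 this).resolve_right ht.ne']

lemma rate_eq_one_of_isMin (hx : ∀ y, F x ≤ F y) (e : Bool) : rate F S x e = 1 := by
  have hg := h.gap_pos x e
  have := hx (x + sgn e * gap S x e)
  rw [h.map_add_sgn_mul ⟨hg.le, le_rfl⟩] at this
  rcases h.rate_eq_one_or x e with h1 | h1
  · exact h1
  · rw [h1] at this; linarith

lemma rate_eq_neg_one_of_isMax (hx : ∀ y, F y ≤ F x) (e : Bool) : rate F S x e = -1 := by
  have hg := h.gap_pos x e
  have := hx (x + sgn e * gap S x e)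
  rw [h.map_add_sgn_mul ⟨hg.le, le_rfl⟩] at this
  rcases h.rate_eq_one_or x e with h1 | h1
  · rw [h1] at this; linarith
  · exact h1

lemma finite_level (c lo hi : ℝ) : (F ⁻¹' {c} ∩ Icc lo hi).Finite := by
  obtain ⟨y₀, hy₀, hhi⟩ := h.exists_gt hi
  set next := fun x => x + gap S x true
  have hmono : StrictMonoOn next (F ⁻¹' {c} ∩ Icc lo hi) := by
    intro u hu v hv huv
    have hnext : next u ≤ v := by
      by_contra! hlt
      have := h.map_add_sgn_mul (x := u) (e := true) (s := v - u) ⟨by linarith, by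
        simp only [next] at hlt; linarith⟩
      have hr := h.rate_eq_one_or u true
      simp only [sgn_true, one_mul, add_sub_cancel, mem_inter_iff, mem_preimage] at this hu hv
      rcases hr with hr | hr <;> rw [hr, hu.1, hv.1] at this <;> linarith
    linarith [h.gap_pos v true]
  refine Finite.of_finite_image ((h.finite_inter_Icc lo y₀).subset ?_) hmono.injOn
  rintro _ ⟨x, hx, rfl⟩
  have hle := h.gap_le (x := x) (e := true) (d := y₀ - x) (by linarith [hx.2.2]) (by simpa)
  exact ⟨by simpa using h.add_gap_mem x true, by linarith [hx.2.1, h.gap_pos x true], by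
    simp only [next]; linarith⟩

lemma add_sgn_mul_mem_Icc {lo hi s : ℝ} (hlo : lo ∈ S) (hhi : hi ∈ S) (hx : x ∈ Icc lo hi)
    (hm : canMove lo hi x e) (hs : s ∈ Icc 0 (gap S x e)) : x + sgn e * s ∈ Icc lo hi := by
  cases e
  · have hlt : lo < x := by simpa [canMove] using hm
    have := h.gap_le (x := x) (e := false) (d := x - lo) (by linarith) (by simpa)
    constructor <;> simp only [sgn_false] <;> linarith [hs.1, hs.2, hx.2]
  · have hlt : x < hi := by simpa [canMove] using hm
    have := h.gap_le (x := x) (e := true) (d := hi - x) (by linarith) (by simpa)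
    constructor <;> simp only [sgn_true] <;> linarith [hs.1, hs.2, hx.1]

lemma exists_extrema (hper : Periodic F 1) (hc : Continuous F) :
    ∃ q r, q < r ∧ r < q + 1 ∧ (∀ x, F q ≤ F x) ∧ ∀ x, F x ≤ F r := by
  have hrange := hper.compact_of_continuous one_ne_zero hc
  obtain ⟨_, ⟨q, rfl⟩, hq⟩ := hrange.exists_isLeast (range_nonempty F)
  obtain ⟨_, ⟨r₀, rfl⟩, hr₀⟩ := hrange.exists_isGreatest (range_nonempty F)
  have hmin : ∀ x, F q ≤ F x := fun x => hq ⟨x, rfl⟩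
  have hmax : ∀ x, F x ≤ F r₀ := fun x => hr₀ ⟨x, rfl⟩
  have hlt : F q < F r₀ := by
    have hg := h.gap_pos q true
    have := h.map_add_sgn_mul (x := q) (e := true) ⟨hg.le, le_rfl⟩
    rw [h.rate_eq_one_of_isMin hmin] at this
    linarith [hmax (q + sgn true * gap S q true)]
  obtain ⟨r, ⟨hqr, hrq⟩, hr⟩ := hper.exists_mem_Ico one_pos r₀ q
  refine ⟨q, r, hqr.lt_of_ne ?_, hrq, hmin, fun x => hr ▸ hmax x⟩
  rintro rfl
  exact hlt.ne' hr

end Zigzag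

def opp (d : Bool × Bool) : Bool × Bool := (!d.1, !d.2)

def turn (adm : Bool × Bool → Bool) (d : Bool × Bool) : Bool × Bool :=
  if adm d then d
  else if adm (d.1, !d.2) then (d.1, !d.2)
  else if adm (!d.1, d.2) then (!d.1, d.2)
  else opp d

/-- `A e` (resp. `B e`): moving the first (resp. second) climber in direction `e` goes uphill;
`oka`, `okb`: the climbers may move in that direction. -/
def admOf (A B oka okb : Bool → Bool) (d : Bool × Bool) : Bool :=
  (A d.1 == B d.2) && oka d.1 && okb d.2

theorem adm_turn : ∀ (adm : Bool × Bool → Bool) (d : Bool × Bool), adm (opp d) →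
    #{e | adm e} ≠ 3 → adm (turn adm d) := by
  decide

theorem turn_opp_turn : ∀ (adm : Bool × Bool → Bool) (d : Bool × Bool), adm (opp d) →
    #{e | adm e} ≠ 3 → turn adm (opp (turn adm d)) = opp d := by
  decide

theorem card_eq_one_of_turn_eq_opp : ∀ (adm : Bool × Bool → Bool) (d : Bool × Bool),
    adm (opp d) → #{e | adm e} ≠ 3 → turn adm d = opp d → #{e | adm e} = 1 := by
  decide

/-- A climber that is blocked in some direction stands at the valley floor (every direction is
uphill for both climbers) or on a peak (every direction is downhill). -/
theorem card_admOf : ∀ A B oka okb : Bool → Bool,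
    (oka true || oka false) → (okb true || okb false) →
    (oka true = false ∨ okb false = false → ∀ e, A e ∧ B e) →
    (oka false = false ∨ okb true = false → ∀ e, A e = false ∧ B e = false) →
    #{d | admOf A B oka okb d} ≠ 3 ∧ (#{d | admOf A B oka okb d} = 1 →
      oka true = false ∧ okb false = false ∨ oka false = false ∧ okb true = false) := by
  decide

/-- Peaks `p < r` and valley floor `q` of a zigzag: the first climber moves in `[p, q]`, the
second in `[q, r]`. -/
structure Valley where
  F : ℝ → ℝ
  S : Set ℝ
  p : ℝ
  q : ℝ
  r : ℝ
  zigzag : Zigzag F S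
  p_mem : p ∈ S
  q_mem : q ∈ S
  r_mem : r ∈ S
  p_lt_q : p < q
  q_lt_r : q < r
  isMin : ∀ x, F q ≤ F x
  isMax : ∀ x, F x ≤ F r
  map_p : F p = F r

@[ext] structure State where
  pos : ℝ × ℝ
  dir : Bool × Bool

def State.run (s : State) (u : ℝ) : ℝ × ℝ :=
  (s.pos.1 + sgn s.dir.1 * u, s.pos.2 + sgn s.dir.2 * u)

namespace Valley

variable (V : Valley)

def good : Set (ℝ × ℝ) := {x | x.1 ∈ Icc V.p V.q ∧ x.2 ∈ Icc V.q V.r ∧ V.F x.1 = V.F x.2}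

def up (x : ℝ) (e : Bool) : Bool := decide (rate V.F V.S x e = 1)

def adm (x : ℝ × ℝ) : Bool × Bool → Bool :=
  admOf (V.up x.1) (V.up x.2) (canMove V.p V.q x.1) (canMove V.q V.r x.2)

/-- Requiring a climber to stand on `S` makes the set of valid states finite, and lets `back`
retrace a segment exactly. -/
def Valid (s : State) : Prop :=
  s.pos ∈ V.good ∧ V.adm s.pos s.dir ∧ (s.pos.1 ∈ V.S ∨ s.pos.2 ∈ V.S)

def time (s : State) : ℝ := min (gap V.S s.pos.1 s.dir.1) (gap V.S s.pos.2 s.dir.2)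

def target (s : State) : ℝ × ℝ := s.run (V.time s)

def step (s : State) : State := ⟨V.target s, turn (V.adm (V.target s)) s.dir⟩

/-- The state that runs the current segment of `s` backwards. -/
def back (s : State) : State := ⟨V.target s, opp s.dir⟩

def start : State := ⟨(V.q, V.q), (false, true)⟩

variable {V}

lemma up_eq_up_iff {x y : ℝ} {e e' : Bool} :
    V.up x e = V.up y e' ↔ rate V.F V.S x e = rate V.F V.S y e' := by
  rcases V.zigzag.rate_eq_one_or x e with hx | hx <;>
    rcases V.zigzag.rate_eq_one_or y e' with hy | hy <;> norm_num [up, hx, hy]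

lemma adm_iff {x : ℝ × ℝ} {d : Bool × Bool} : V.adm x d ↔
    rate V.F V.S x.1 d.1 = rate V.F V.S x.2 d.2 ∧ canMove V.p V.q x.1 d.1 ∧
      canMove V.q V.r x.2 d.2 := by
  simp [adm, admOf, up_eq_up_iff, and_assoc]

lemma up_of_min {x : ℝ} (hx : V.F x = V.F V.q) (e : Bool) : V.up x e := by
  simpa [up] using V.zigzag.rate_eq_one_of_isMin (fun y => hx ▸ V.isMin y) e

lemma up_of_max {x : ℝ} (hx : V.F x = V.F V.r) (e : Bool) : V.up x e = false := by
  norm_num [up, V.zigzag.rate_eq_neg_one_of_isMax (fun y => hx ▸ V.isMax y) e]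

lemma card_adm {x : ℝ × ℝ} (hx : x ∈ V.good) : #{d | V.adm x d} ≠ 3 ∧
    (#{d | V.adm x d} = 1 → x = (V.q, V.q) ∨ x = (V.p, V.r)) := by
  obtain ⟨h₁, h₂, hF⟩ := hx
  have hfloor : V.F x.1 = V.F V.q → ∀ e, V.up x.1 e ∧ V.up x.2 e := fun h e =>
    ⟨V.up_of_min h e, V.up_of_min (hF ▸ h) e⟩
  have hpeak : V.F x.1 = V.F V.r → ∀ e, V.up x.1 e = false ∧ V.up x.2 e = false := fun h e =>
    ⟨V.up_of_max h e, V.up_of_max (hF ▸ h) e⟩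
  have key := card_admOf _ _ _ _ (canMove_true_or_false V.p_lt_q h₁)
    (canMove_true_or_false V.q_lt_r h₂)
    (fun h => hfloor <| h.elim (fun h => by rw [eq_hi_of_canMove_true h₁ h])
      (fun h => by rw [hF, eq_lo_of_canMove_false h₂ h]))
    (fun h => hpeak <| h.elim (fun h => by rw [eq_lo_of_canMove_false h₁ h, V.map_p])
      (fun h => by rw [hF, eq_hi_of_canMove_true h₂ h]))
  refine ⟨key.1, fun h1 => (key.2 h1).imp (fun ⟨ha, hb⟩ => ?_) (fun ⟨ha, hb⟩ => ?_)⟩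
  · exact Prod.ext (eq_hi_of_canMove_true h₁ ha) (eq_lo_of_canMove_false h₂ hb)
  · exact Prod.ext (eq_lo_of_canMove_false h₁ ha) (eq_hi_of_canMove_true h₂ hb)

lemma time_pos (s : State) : 0 < V.time s :=
  lt_min (V.zigzag.gap_pos _ _) (V.zigzag.gap_pos _ _)

lemma run_mem_good {s : State} (hs : V.Valid s) {u : ℝ} (hu : u ∈ Icc 0 (V.time s)) :
    s.run u ∈ V.good := by
  obtain ⟨⟨ha, hb, hF⟩, hadm, -⟩ := hs
  obtain ⟨hrate, hma, hmb⟩ := adm_iff.1 hadm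
  have hua : u ∈ Icc 0 (gap V.S s.pos.1 s.dir.1) := ⟨hu.1, hu.2.trans (min_le_left _ _)⟩
  have hub : u ∈ Icc 0 (gap V.S s.pos.2 s.dir.2) := ⟨hu.1, hu.2.trans (min_le_right _ _)⟩
  refine ⟨V.zigzag.add_sgn_mul_mem_Icc V.p_mem V.q_mem ha hma hua,
    V.zigzag.add_sgn_mul_mem_Icc V.q_mem V.r_mem hb hmb hub, ?_⟩
  simp only [State.run]
  rw [V.zigzag.map_add_sgn_mul hua, V.zigzag.map_add_sgn_mul hub, hF, hrate]

lemma target_mem_good {s : State} (hs : V.Valid s) : V.target s ∈ V.good :=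
  V.run_mem_good hs ⟨(V.time_pos s).le, le_rfl⟩

lemma target_mem_S (s : State) : (V.target s).1 ∈ V.S ∨ (V.target s).2 ∈ V.S := by
  rcases min_choice (gap V.S s.pos.1 s.dir.1) (gap V.S s.pos.2 s.dir.2) with h | h
  · left; simp only [target, time, h, State.run]; exact V.zigzag.add_gap_mem _ _
  · right; simp only [target, time, h, State.run]; exact V.zigzag.add_gap_mem _ _

lemma adm_target_opp {s : State} (hs : V.Valid s) : V.adm (V.target s) (opp s.dir) := by
  obtain ⟨⟨ha, hb, -⟩, hadm, -⟩ := hs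
  have ht := V.time_pos s
  refine adm_iff.2 ⟨?_, canMove_back ha ht _, canMove_back hb ht _⟩
  simp only [target, State.run, opp]
  rw [V.zigzag.rate_back ht (min_le_left _ _), V.zigzag.rate_back ht (min_le_right _ _),
    (adm_iff.1 hadm).1]

lemma card_adm_target_ne_three {s : State} (hs : V.Valid s) : #{d | V.adm (V.target s) d} ≠ 3 :=
  (card_adm (V.target_mem_good hs)).1

lemma valid_back {s : State} (hs : V.Valid s) : V.Valid (V.back s) :=
  ⟨V.target_mem_good hs, V.adm_target_opp hs, V.target_mem_S s⟩

lemma valid_step {s : State} (hs : V.Valid s) : V.Valid (V.step s) :=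
  ⟨V.target_mem_good hs, adm_turn _ _ (V.adm_target_opp hs) (card_adm_target_ne_three hs),
    V.target_mem_S s⟩

lemma time_back {s : State} (hs : V.Valid s) : V.time (V.back s) = V.time s := by
  have ht := V.time_pos s
  refine le_antisymm ?_ (le_min (V.zigzag.le_gap_back (min_le_left _ _))
    (V.zigzag.le_gap_back (min_le_right _ _)))
  rcases hs.2.2 with h | h
  · exact (min_le_left _ _).trans (V.zigzag.gap_back_le ht h)
  · exact (min_le_right _ _).trans (V.zigzag.gap_back_le ht h)

lemma target_back {s : State} (hs : V.Valid s) : V.target (V.back s) = s.pos := by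
  simp only [target, V.time_back hs]
  ext <;> simp [back, target, State.run, opp]

lemma back_back {s : State} (hs : V.Valid s) : V.back (V.back s) = s := by
  ext1
  · exact V.target_back hs
  · simp [back, opp]

lemma back_ne (s : State) : V.back s ≠ s := fun h => by
  simpa [back, opp] using congrArg (·.dir.1) h

lemma step_back_step {s : State} (hs : V.Valid s) : V.step (V.back (V.step s)) = V.back s := by
  have htarget : V.target (V.back (V.step s)) = V.target s := V.target_back (V.valid_step hs)
  ext1
  · exact htarget
  · show turn (V.adm (V.target (V.back (V.step s)))) (opp (turn (V.adm (V.target s)) s.dir)) = _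
    rw [htarget]
    exact turn_opp_turn _ _ (V.adm_target_opp hs) (card_adm_target_ne_three hs)

lemma finite_valid : {s | V.Valid s}.Finite := by
  have hpos : {x : ℝ × ℝ | x ∈ V.good ∧ (x.1 ∈ V.S ∨ x.2 ∈ V.S)}.Finite := by
    refine (((V.zigzag.finite_inter_Icc V.p V.q).biUnion fun a _ =>
      (finite_singleton a).prod (V.zigzag.finite_level (V.F a) V.q V.r)).union
      ((V.zigzag.finite_inter_Icc V.q V.r).biUnion fun b _ =>
      (V.zigzag.finite_level (V.F b) V.p V.q).prod (finite_singleton b))).subset ?_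
    rintro ⟨a, b⟩ ⟨⟨ha, hb, hF⟩, haS | hbS⟩
    · exact Or.inl (mem_biUnion ⟨haS, ha⟩ ⟨rfl, hF.symm, hb⟩)
    · exact Or.inr (mem_biUnion ⟨hbS, hb⟩ ⟨⟨hF, ha⟩, rfl⟩)
  refine ((hpos.prod (finite_univ (α := Bool × Bool))).image fun x => State.mk x.1 x.2).subset ?_
  rintro s ⟨hgood, -, hS⟩
  exact ⟨(s.pos, s.dir), ⟨⟨hgood, hS⟩, trivial⟩, rfl⟩

lemma target_eq_corner {s : State} (hs : V.Valid s) (h : V.step s = V.back s) :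
    V.target s = (V.q, V.q) ∨ V.target s = (V.p, V.r) :=
  (card_adm (V.target_mem_good hs)).2 <| card_eq_one_of_turn_eq_opp _ _
    (V.adm_target_opp hs) (card_adm_target_ne_three hs) (congrArg State.dir h)

lemma valid_start : V.Valid V.start := by
  refine ⟨⟨⟨V.p_lt_q.le, le_rfl⟩, ⟨le_rfl, V.q_lt_r.le⟩, rfl⟩, adm_iff.2 ⟨?_, ?_, ?_⟩,
    Or.inl V.q_mem⟩
  · simp only [start]
    rw [V.zigzag.rate_eq_one_of_isMin V.isMin, V.zigzag.rate_eq_one_of_isMin V.isMin]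
  · simp [start, canMove, V.p_lt_q]
  · simp [start, canMove, V.q_lt_r]

lemma eq_start {s : State} (hs : V.Valid s) (hpos : s.pos = (V.q, V.q)) : s = V.start := by
  obtain ⟨-, hma, hmb⟩ := adm_iff.1 hs.2.1
  rw [hpos] at hma hmb
  ext1
  · exact hpos
  · cases h1 : s.dir.1 <;> cases h2 : s.dir.2 <;> simp_all [canMove, start, Prod.ext_iff]

lemma joinedIn_target {s : State} (hs : V.Valid s) : JoinedIn V.good s.pos (V.target s) := by
  refine JoinedIn.ofLine (f := fun t => s.run (t * V.time s))
    (by simp only [State.run]; fun_prop) (by simp [State.run]) (by simp [target]) ?_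
  rintro _ ⟨t, ht, rfl⟩
  exact V.run_mem_good hs ⟨mul_nonneg ht.1 (V.time_pos s).le,
    mul_le_of_le_one_left (V.time_pos s).le ht.2⟩

lemma valid_joinedIn_iterate (n : ℕ) :
    V.Valid (V.step^[n] V.start) ∧ JoinedIn V.good (V.q, V.q) (V.step^[n] V.start).pos := by
  induction n with
  | zero => exact ⟨V.valid_start, JoinedIn.refl V.valid_start.1⟩
  | succ n ih =>
    rw [iterate_succ_apply']
    exact ⟨V.valid_step ih.1, ih.2.trans (V.joinedIn_target ih.1)⟩

theorem joinedIn : JoinedIn V.good (V.q, V.q) (V.p, V.r) := by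
  obtain ⟨n, hturn, hne⟩ := exists_turn_of_reversible V.finite_valid V.valid_start
    (fun _ hs => V.valid_step hs) (fun _ hs => V.back_back hs) V.back_ne
    (fun _ hs => V.step_back_step hs)
    (fun s hs h => V.eq_start (V.valid_back hs) (congrArg State.pos h))
  obtain ⟨hs, hjoin⟩ := V.valid_joinedIn_iterate n
  rcases V.target_eq_corner hs hturn with hqq | hpr
  · exact absurd (V.eq_start (V.valid_step hs) hqq) hne
  · exact hpr ▸ hjoin.trans (V.joinedIn_target hs)

end Valley

theorem zigzag_primitive {f : ℝ → ℝ} (hper : Periodic f 1) (hval : ∀ x, f x = -1 ∨ f x = 1)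
    (hdisc : {x | x ∈ Ico (0:ℝ) 1 ∧ ¬ContinuousAt f x}.Finite)
    (hfi : ∀ a b, IntervalIntegrable f MeasureTheory.volume a b) :
    Zigzag (fun x => ∫ t in 0..x, f t) {x | ¬ContinuousAt f x ∨ Int.fract x = 0} where
  finite_inter_Icc := by
    refine finite_inter_Icc_of_periodic (fun x => ?_)
      ((hdisc.union (finite_singleton 0)).subset ?_)
    · simpa [Int.fract_add_one] using
        congrArg (· ∨ Int.fract x = 0) (periodic_setOf_not_continuousAt hper x)
    · rintro x ⟨hx | hx, hx01⟩
      · exact Or.inl ⟨hx01, hx⟩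
      · exact Or.inr (by rwa [Int.fract_eq_self.2 hx01] at hx)
  exists_gt x := ⟨⌊x⌋ + 1, Or.inr (by simp), by exact_mod_cast Int.lt_floor_add_one x⟩
  exists_lt x := ⟨⌈x⌉ - 1, Or.inr (by simp), by linarith [Int.ceil_lt_add_one x]⟩
  affine x y hxy hS := by
    have hcont : ContinuousOn f (Ioo x y) := fun z hz =>
      (not_not.1 fun h => disjoint_left.1 hS (Or.inl h) hz).continuousWithinAt
    set c := f ((x + y) / 2)
    have hconst : EqOn f (fun _ => c) (Ioo x y) := fun z hz =>
      isPreconnected_Ioo.constant_of_mapsTo (toFinite {-1, 1}).isDiscrete hcont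
        (fun w _ => by rcases hval w with h | h <;> simp [h]) hz
        ⟨by linarith, by linarith⟩
    refine ⟨c, by rcases hval ((x + y) / 2) with h | h <;> simp [c, h], fun z hz => ?_⟩
    rw [← intervalIntegral.integral_add_adjacent_intervals (hfi 0 x) (hfi x z),
      intervalIntegral.integral_congr_Ioo_of_le hz.1
        (hconst.mono (Ioo_subset_Ioo_right hz.2)),
      intervalIntegral.integral_const, smul_eq_mul, mul_comm]

end

end MountainClimbing

open MeasureTheory intervalIntegral

/-- Mountain-climbing theorem on the circle (Theorem 6): for a 1-periodic ±1-valued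
function `f` with finitely many discontinuities in `[0,1)` and zero mean, there are
continuous endpoint functions `a, b` tracing arcs of integral zero, from a single
point to the whole circle. -/
theorem mountain_climbing_circle (f : ℝ → ℝ)
    (hper : Function.Periodic f 1)
    (hval : ∀ x, f x = -1 ∨ f x = 1)
    (hdisc : {x | x ∈ Set.Ico (0:ℝ) 1 ∧ ¬ ContinuousAt f x}.Finite)
    (hint : ∫ x in (0:ℝ)..1, f x = 0) :
    ∃ T : ℝ, 0 < T ∧ ∃ a b : ℝ → ℝ,
      ContinuousOn a (Set.Icc 0 T) ∧ ContinuousOn b (Set.Icc 0 T) ∧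
      a 0 = b 0 ∧
      (∀ t ∈ Set.Icc (0:ℝ) T,
        a t ≤ b t ∧ b t ≤ a t + 1 ∧ (∫ x in (a t)..(b t), f x) = 0) ∧
      b T = a T + 1 := by
  have hfi : ∀ a b, IntervalIntegrable f volume a b :=
    intervalIntegrable_of_countable_not_continuousAt (C := 1)
      (fun x => by rcases hval x with h | h <;> simp [h])
      (countable_of_finite_inter_Icc (finite_inter_Icc_of_periodic
        (periodic_setOf_not_continuousAt hper) (hdisc.subset fun _ hx => ⟨hx.2, hx.1⟩)))
  set F := fun x => ∫ t in (0:ℝ)..x, f t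
  have hFper : Periodic F 1 := fun x => by
    simp only [F, hper.intervalIntegral_add_eq_add 0 x hfi, zero_add, hint, add_zero]
  have hZ := MountainClimbing.zigzag_primitive hper hval hdisc hfi
  obtain ⟨q, r, hqr, hrq, hmin, hmax⟩ := hZ.exists_extrema hFper (continuous_primitive hfi 0)
  let V : MountainClimbing.Valley := ⟨F, _, r - 1, q, r,
    hZ.union_finite (toFinite {r - 1, q, r}), by simp, by simp, by simp, by linarith, hqr,
    hmin, hmax, hFper.sub_eq r⟩
  obtain ⟨a, b, ha, hb, h0, h1, hab⟩ := V.joinedIn.exists_continuous_coord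
  simp only [Prod.mk.injEq, V] at h0 h1
  refine ⟨1, one_pos, a, b, ha.continuousOn, hb.continuousOn, h0.1.trans h0.2.symm,
    fun t ht => ?_, by linarith [h1.1, h1.2]⟩
  obtain ⟨⟨hap, haq⟩, ⟨hbq, hbr⟩, hF⟩ := hab t ht
  refine ⟨haq.trans hbq, by linarith [show r - 1 ≤ a t from hap], ?_⟩
  rw [← integral_interval_sub_left (hfi 0 _) (hfi 0 _)]
  exact sub_eq_zero.2 hF.symm
end

section
/- Let Δ be a real number with Δ ≥ e^{e⁴}. Let H be a finite bipartite graph with parts A and B whose maximum degree is at most Δ, and in which every vertex of A has degree at least 100Δ/log Δ (natural logarithm). Then there exists a function θ : A → B such that a is adjacent to θ(a) in H for every a ∈ A, and for every b ∈ B the preimage θ⁻¹(b) has size at most (1/2)·log Δ. -/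
/-!
Hall's theorem with capacities: split every vertex `b ∈ B` into `k = ⌊(log Δ)/2⌋` copies.
Double counting the edges between a set `S ⊆ A` and its neighbourhood `N(S)` gives
`|S| · 100Δ / log Δ ≤ |N(S)| · Δ`, so `|S| ≤ (log Δ / 100) · |N(S)| ≤ k · |N(S)|`, which is
Hall's condition for the split graph. A matching of `A` into the split graph is a map `A → B`
along edges with fibres of size at most `k`.
-/

open Finset

theorem Finset.exists_mem_card_fiber_le_of_card_le_mul_card_biUnion {ι β : Type*} [Fintype ι]
    [DecidableEq β] (t : ι → Finset β) (k : ℕ)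
    (h : ∀ s : Finset ι, #s ≤ k * #(s.biUnion t)) :
    ∃ f : ι → β, (∀ i, f i ∈ t i) ∧ ∀ b, #{i | f i = b} ≤ k := by
  have hall : ∀ s : Finset ι, #s ≤ #(s.biUnion fun i => t i ×ˢ (univ : Finset (Fin k))) := by
    intro s
    have : s.biUnion (fun i => t i ×ˢ (univ : Finset (Fin k))) = s.biUnion t ×ˢ univ := by
      ext; simp
    rw [this, card_product, card_univ, Fintype.card_fin, mul_comm]
    exact h s
  obtain ⟨g, hg_inj, hg_mem⟩ := (all_card_le_biUnion_card_iff_exists_injective _).1 hall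
  refine ⟨fun i => (g i).1, fun i => (mem_product.1 (hg_mem i)).1, fun b => ?_⟩
  calc #{i | (g i).1 = b}
      ≤ #(univ : Finset (Fin k)) := by
        refine card_le_card_of_injOn (fun i => (g i).2) (fun _ _ => mem_coe.2 (mem_univ _)) ?_
        intro i hi j hj hij
        simp only [coe_filter, mem_univ, true_and, Set.mem_ofPred_eq] at hi hj
        exact hg_inj (Prod.ext (hi.trans hj.symm) hij)
    _ = k := card_fin k

theorem SimpleGraph.card_mul_le_card_biUnion_neighborFinset_mul {V R : Type*} [Fintype V]
    [DecidableEq V] [Semiring R] [PartialOrder R] [IsOrderedRing R]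
    (G : SimpleGraph V) [DecidableRel G.Adj] {s : Finset V} {d Δ : R}
    (hd : ∀ a ∈ s, d ≤ G.degree a) (hΔ : ∀ v, (G.degree v : R) ≤ Δ) :
    #s * d ≤ #(s.biUnion fun v => G.neighborFinset v) * Δ := by
  simp only [← nsmul_eq_mul]
  refine card_nsmul_le_card_nsmul G.Adj (fun a ha => ?_) (fun b _ => ?_)
  · have : (s.biUnion fun v => G.neighborFinset v).bipartiteAbove G.Adj a =
        G.neighborFinset a := by
      ext b
      simp only [mem_bipartiteAbove, mem_biUnion, SimpleGraph.mem_neighborFinset]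
      exact ⟨And.right, fun hab => ⟨⟨a, ha, hab⟩, hab⟩⟩
    rw [this, SimpleGraph.card_neighborFinset_eq_degree]
    exact hd a ha
  · refine le_trans ?_ (hΔ b)
    rw [← SimpleGraph.card_neighborFinset_eq_degree]
    gcongr
    intro a ha
    simp only [mem_bipartiteBelow, SimpleGraph.mem_neighborFinset] at ha ⊢
    exact ha.2.symm

theorem SimpleGraph.card_le_mul_card_biUnion_neighborFinset {V R : Type*} [Fintype V]
    [DecidableEq V] [Field R] [LinearOrder R] [IsStrictOrderedRing R]
    (G : SimpleGraph V) [DecidableRel G.Adj] {s : Finset V} {Δ : R} {k : ℕ} (hk : 0 < k)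
    (hΔ : 0 < Δ) (hmax : ∀ v, (G.degree v : R) ≤ Δ) (hs : ∀ a ∈ s, Δ / k ≤ G.degree a) :
    #s ≤ k * #(s.biUnion fun v => G.neighborFinset v) := by
  set N := s.biUnion fun v => G.neighborFinset v
  have hcount := G.card_mul_le_card_biUnion_neighborFinset_mul hs hmax
  have hk' : (0 : R) < k := by exact_mod_cast hk
  have : (#s : R) ≤ k * #N := by
    rw [mul_div_assoc', div_le_iff₀ hk', mul_right_comm, mul_comm (#N : R)] at hcount
    exact le_of_mul_le_mul_right hcount hΔ
  exact_mod_cast this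

theorem exists_map_small_fibers_general (Δ : ℝ) (hΔ : Real.exp (Real.exp 4) ≤ Δ)
    (V : Type) [Fintype V] [DecidableEq V] (G : SimpleGraph V) [DecidableRel G.Adj]
    (A B : Finset V)
    (hcover : ∀ v : V, v ∈ A ∨ v ∈ B)
    (hbip : ∀ u v : V, G.Adj u v →
      ¬(u ∈ A ∧ v ∈ A) ∧ ¬(u ∈ B ∧ v ∈ B))
    (hmaxdeg : ∀ v : V, (G.degree v : ℝ) ≤ Δ)
    (hAdeg : ∀ a ∈ A, 100 * Δ / Real.log Δ ≤ (G.degree a : ℝ)) :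
    ∃ θ : V → V,
      (∀ a ∈ A, θ a ∈ B ∧ G.Adj a (θ a)) ∧
      (∀ b ∈ B, ((A.filter fun a => θ a = b).card : ℝ) ≤ (1 / 2) * Real.log Δ) := by
  have hΔ0 : 0 < Δ := (Real.exp_pos _).trans_le hΔ
  have hlog : 2 ≤ Real.log Δ := by
    rw [Real.le_log_iff_exp_le hΔ0]
    refine le_trans (Real.exp_le_exp.2 ?_) hΔ
    linarith [Real.add_one_le_exp (4 : ℝ)]
  set k := ⌊Real.log Δ / 2⌋₊
  have hk_le : (k : ℝ) ≤ Real.log Δ / 2 := Nat.floor_le (by linarith)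
  have hk_ge : Real.log Δ / 100 ≤ k := by
    linarith [Nat.div_two_lt_floor (a := Real.log Δ / 2) (by linarith)]
  have hk_pos : 0 < k := by exact_mod_cast (by linarith : (0 : ℝ) < k)
  have hdeg : ∀ a ∈ A, Δ / k ≤ G.degree a := fun a ha =>
    calc Δ / k ≤ Δ / (Real.log Δ / 100) := by gcongr
      _ = 100 * Δ / Real.log Δ := by field_simp
      _ ≤ G.degree a := hAdeg a ha
  have hhall (s : Finset A) : #s ≤ k * #(s.biUnion fun a => G.neighborFinset a) := by
    have := G.card_le_mul_card_biUnion_neighborFinset (s := s.map (Function.Embedding.subtype _))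
      hk_pos hΔ0 hmaxdeg (by simpa using fun a ha _ => hdeg a ha)
    rwa [card_map, map_eq_image, image_biUnion] at this
  obtain ⟨f, hf_adj, hf_fiber⟩ :=
    exists_mem_card_fiber_le_of_card_le_mul_card_biUnion _ k hhall
  refine ⟨fun v => if h : v ∈ A then f ⟨v, h⟩ else v, fun a ha => ?_, fun b _ => ?_⟩
  · have hadj : G.Adj a (f ⟨a, ha⟩) := (G.mem_neighborFinset _ _).1 (hf_adj _)
    simp only [dif_pos ha]
    exact ⟨(hcover _).resolve_left fun h => (hbip _ _ hadj).1 ⟨ha, h⟩, hadj⟩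
  · have : (A.filter fun a => (if h : a ∈ A then f ⟨a, h⟩ else a) = b) =
        (univ.filter fun a => f a = b).map (Function.Embedding.subtype _) := by
      ext v
      by_cases hv : v ∈ A <;> simp [hv]
    rw [this, card_map]
    calc (#{a | f a = b} : ℝ) ≤ k := by exact_mod_cast hf_fiber b
      _ ≤ 1 / 2 * Real.log Δ := by linarith

/-- Lemma 8: in a finite bipartite graph with parts `A`, `B`, maximum degree at most
`Δ ≥ e^{e⁴}`, where every vertex of `A` has degree at least `100Δ/log Δ`, there is a
map `θ : A → B` along edges all of whose fibers have size at most `(1/2)·log Δ`. -/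
theorem exists_map_small_fibers (Δ : ℝ) (hΔ : Real.exp (Real.exp 4) ≤ Δ)
    (V : Type) [Fintype V] [DecidableEq V] (G : SimpleGraph V) [DecidableRel G.Adj]
    (A B : Finset V)
    (hcover : ∀ v : V, v ∈ A ∨ v ∈ B) (hdisj : Disjoint A B)
    (hbip : ∀ u v : V, G.Adj u v →
      ¬(u ∈ A ∧ v ∈ A) ∧ ¬(u ∈ B ∧ v ∈ B))
    (hmaxdeg : ∀ v : V, (G.degree v : ℝ) ≤ Δ)
    (hAdeg : ∀ a ∈ A, 100 * Δ / Real.log Δ ≤ (G.degree a : ℝ)) :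
    ∃ θ : V → V,
      (∀ a ∈ A, θ a ∈ B ∧ G.Adj a (θ a)) ∧
      (∀ b ∈ B, ((A.filter fun a => θ a = b).card : ℝ) ≤ (1 / 2) * Real.log Δ) :=
  exists_map_small_fibers_general Δ hΔ V G A B hcover hbip hmaxdeg hAdeg
end

section
/- Let Δ ≥ 2 be an integer, let T be a tree on n ≥ 2 vertices with maximum degree at most Δ, let v₀ be a vertex of T of degree at most Δ − 1, and let B be a positive integer with B < n. Then the vertex set of T can be partitioned into two nonempty sets V″ and V′, each inducing a connected subgraph (subtree) of T, such that (B−1)/(Δ−1) < |V″| ≤ B and v₀ ∈ V′. -/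
/-!
Root the tree at `v₀` and let `D(x)` be the set of vertices `w` such that `x` lies on a shortest
path from `v₀` to `w` (the subtree below `x`). Shortest paths show that `D(x)` and its complement
both induce connected subgraphs, `D(v₀)` is everything, and `D(x)` is covered by `x` together with
the sets `D(y)` of the at most `Δ - 1` children `y` of `x`. Take `x` minimising `|D(x)|` among the
vertices with `|D(x)| > (B - 1)/(Δ - 1)`: its children all fail this bound, so
`|D(x)| ≤ 1 + (Δ - 1)(B - 1)/(Δ - 1) = B < n`, hence `x ≠ v₀`, and `V'' = D(x)` works.
-/

open Finset

namespace SimpleGraph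

variable {V : Type} {G : SimpleGraph V} {r u v w x y z : V}

lemma Walk.dist_add_dist_of_mem_support (p : G.Walk u v) (hp : p.length = G.dist u v)
    (hz : z ∈ p.support) : G.dist u z + G.dist z v = G.dist u v := by
  classical
  have hlen := congrArg Walk.length (p.take_spec hz)
  rw [Walk.length_append] at hlen
  have := dist_le (p.takeUntil z hz)
  have := dist_le (p.dropUntil z hz)
  have := (p.takeUntil z hz).reachable.dist_triangle_left v
  omega

lemma Connected.exists_adj_dist_add_one (hG : G.Connected) (h : u ≠ v) :
    ∃ y, G.Adj u y ∧ G.dist y v + 1 = G.dist u v := by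
  obtain ⟨p, hp⟩ := hG.exists_walk_length_eq_dist u v
  cases p with
  | nil => exact absurd rfl h
  | @cons _ y _ hadj q =>
    refine ⟨y, hadj, le_antisymm ?_ ?_⟩
    · have := dist_le q
      rw [Walk.length_cons] at hp
      omega
    · have := hG.dist_triangle (u := u) (v := y) (w := v)
      rwa [dist_eq_one_iff_adj.2 hadj, add_comm] at this

lemma induce_connected_of_forall_walk {s : Set V} (hx : x ∈ s)
    (h : ∀ w ∈ s, ∃ p : G.Walk x w, ∀ z ∈ p.support, z ∈ s) : (G.induce s).Connected :=
  G.induce_connected_of_patches x hx fun hw ↦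
    let ⟨p, hp⟩ := h _ hw
    ⟨_, hp, p.start_mem_support, p.end_mem_support, p.connected_induce_support.preconnected _ _⟩

variable [Fintype V]

/-- In a tree rooted at `r`, the vertex set of the subtree below `x`. -/
noncomputable def descendants (G : SimpleGraph V) (r x : V) : Finset V :=
  {w | G.dist r x + G.dist x w = G.dist r w}

@[simp]
lemma mem_descendants : w ∈ G.descendants r x ↔ G.dist r x + G.dist x w = G.dist r w := by
  simp [descendants]

lemma self_mem_descendants : x ∈ G.descendants r x := by
  simp

lemma descendants_root : G.descendants r r = univ := by
  ext
  simp

lemma Connected.descendants_subset (hG : G.Connected) (hy : y ∈ G.descendants r x) :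
    G.descendants r y ⊆ G.descendants r x := by
  intro w hw
  rw [mem_descendants] at *
  have := hG.dist_triangle (u := x) (v := y) (w := w)
  have := hG.dist_triangle (u := r) (v := x) (w := w)
  omega

lemma Connected.mem_descendants_of_dist_add_dist (hG : G.Connected)
    (hw : w ∈ G.descendants r x) (hz : G.dist x z + G.dist z w = G.dist x w) :
    z ∈ G.descendants r x := by
  rw [mem_descendants] at *
  have := hG.dist_triangle (u := r) (v := x) (w := z)
  have := hG.dist_triangle (u := r) (v := z) (w := w)
  omega

lemma Connected.root_notMem_descendants (hG : G.Connected) (hx : x ≠ r) :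
    r ∉ G.descendants r x := by
  rw [mem_descendants, dist_self, Nat.add_eq_zero_iff, hG.dist_eq_zero_iff]
  exact fun h ↦ hx h.1.symm

lemma Connected.connected_induce_descendants (hG : G.Connected) :
    (G.induce (G.descendants r x : Set V)).Connected := by
  refine induce_connected_of_forall_walk (mem_coe.2 self_mem_descendants) fun w hw ↦ ?_
  obtain ⟨p, hp⟩ := hG.exists_walk_length_eq_dist x w
  exact ⟨p, fun z hz ↦ hG.mem_descendants_of_dist_add_dist hw
    (p.dist_add_dist_of_mem_support hp hz)⟩

lemma Connected.connected_induce_compl_descendants [DecidableEq V] (hG : G.Connected)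
    (hx : x ≠ r) :
    (G.induce ((univ \ G.descendants r x : Finset V) : Set V)).Connected := by
  refine induce_connected_of_forall_walk
    (mem_coe.2 (mem_sdiff.2 ⟨mem_univ r, hG.root_notMem_descendants hx⟩)) fun w hw ↦ ?_
  obtain ⟨p, hp⟩ := hG.exists_walk_length_eq_dist r w
  refine ⟨p, fun z hz ↦ ?_⟩
  have hwz : w ∈ G.descendants r z := mem_descendants.2 (p.dist_add_dist_of_mem_support hp hz)
  simp only [coe_sdiff, coe_univ, Set.mem_sdiff, Set.mem_univ, true_and, mem_coe] at hw ⊢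
  exact fun hzx ↦ hw (hG.descendants_subset hzx hwz)

lemma Adj.mem_descendants_iff (h : G.Adj x y) :
    y ∈ G.descendants r x ↔ G.dist r x + 1 = G.dist r y := by
  rw [mem_descendants, dist_eq_one_iff_adj.2 h]

variable [DecidableRel G.Adj]

noncomputable def children (G : SimpleGraph V) [DecidableRel G.Adj] (r x : V) : Finset V :=
  {y ∈ G.neighborFinset x | G.dist r x + 1 = G.dist r y}

@[simp]
lemma mem_children : y ∈ G.children r x ↔ G.Adj x y ∧ G.dist r x + 1 = G.dist r y := by
  simp [children]

lemma Connected.descendants_ssubset_of_mem_children (hG : G.Connected)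
    (hy : y ∈ G.children r x) : G.descendants r y ⊂ G.descendants r x := by
  rw [mem_children] at hy
  refine ssubset_of_subset_of_ne (hG.descendants_subset (hy.1.mem_descendants_iff.2 hy.2))
    fun h ↦ ?_
  have hx : x ∈ G.descendants r y := h ▸ self_mem_descendants
  rw [hy.1.symm.mem_descendants_iff] at hx
  omega

lemma Connected.card_descendants_le (hG : G.Connected) :
    #(G.descendants r x) ≤ ∑ y ∈ G.children r x, #(G.descendants r y) + 1 := by
  classical
  have hcover : G.descendants r x ⊆ insert x ((G.children r x).biUnion (G.descendants r)) := by
    intro w hw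
    rcases eq_or_ne x w with rfl | hxw
    · exact mem_insert_self _ _
    obtain ⟨y, hxy, hyw⟩ := hG.exists_adj_dist_add_one hxw
    have hxyw : G.dist x y + G.dist y w = G.dist x w := by
      rw [dist_eq_one_iff_adj.2 hxy, add_comm, hyw]
    have hyx := hG.mem_descendants_of_dist_add_dist hw hxyw
    refine mem_insert_of_mem (mem_biUnion.2
      ⟨y, mem_children.2 ⟨hxy, hxy.mem_descendants_iff.1 hyx⟩, ?_⟩)
    rw [mem_descendants] at hw hyx ⊢
    omega
  calc #(G.descendants r x)
      ≤ #(insert x ((G.children r x).biUnion (G.descendants r))) := card_le_card hcover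
    _ ≤ #((G.children r x).biUnion (G.descendants r)) + 1 := card_insert_le _ _
    _ ≤ ∑ y ∈ G.children r x, #(G.descendants r y) + 1 := by gcongr; exact card_biUnion_le

lemma Connected.card_children_lt_degree (hG : G.Connected) (hx : x ≠ r) :
    #(G.children r x) < G.degree x := by
  obtain ⟨p, hxp, hpr⟩ := hG.exists_adj_dist_add_one hx
  rw [← card_neighborFinset_eq_degree]
  refine card_lt_card (filter_ssubset.2 ⟨p, (mem_neighborFinset _ _ _).2 hxp, fun hp ↦ ?_⟩)
  rw [dist_comm, dist_comm (u := r)] at hp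
  omega

lemma Connected.card_children_le {Δ : ℕ} (hG : G.Connected) (hmax : ∀ v, G.degree v ≤ Δ)
    (hr : G.degree r ≤ Δ - 1) : #(G.children r x) ≤ Δ - 1 := by
  rcases eq_or_ne x r with rfl | hx
  · exact (card_filter_le _ _).trans ((card_neighborFinset_eq_degree G x).trans_le hr)
  · have := hG.card_children_lt_degree hx
    have := hmax x
    omega

lemma Connected.card_descendants_le_of_forall_children {Δ B : ℕ} (hG : G.Connected)
    (hΔ : 2 ≤ Δ) (hB : 0 < B) (hΔx : #(G.children r x) ≤ Δ - 1)
    (hchild : ∀ y ∈ G.children r x,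
      (#(G.descendants r y) : ℝ) ≤ ((B : ℝ) - 1) / ((Δ : ℝ) - 1)) :
    #(G.descendants r x) ≤ B := by
  have hΔ' : (0 : ℝ) < (Δ : ℝ) - 1 := by
    have : (2 : ℝ) ≤ Δ := by exact_mod_cast hΔ
    linarith
  have hB' : (0 : ℝ) ≤ (B : ℝ) - 1 := by
    have : (1 : ℝ) ≤ B := by exact_mod_cast hB
    linarith
  have hΔx' : (#(G.children r x) : ℝ) ≤ (Δ : ℝ) - 1 := by
    rw [le_sub_iff_add_le]
    exact_mod_cast (by omega : #(G.children r x) + 1 ≤ Δ)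
  suffices (#(G.descendants r x) : ℝ) ≤ B by exact_mod_cast this
  calc (#(G.descendants r x) : ℝ)
      ≤ ∑ y ∈ G.children r x, (#(G.descendants r y) : ℝ) + 1 := by
        exact_mod_cast hG.card_descendants_le
    _ ≤ #(G.children r x) • (((B : ℝ) - 1) / ((Δ : ℝ) - 1)) + 1 := by
        gcongr; exact sum_le_card_nsmul _ _ _ hchild
    _ ≤ ((Δ : ℝ) - 1) * (((B : ℝ) - 1) / ((Δ : ℝ) - 1)) + 1 := by
        rw [nsmul_eq_mul]; gcongr
    _ = B := by rw [mul_div_cancel₀ _ hΔ'.ne']; ring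

lemma Connected.exists_descendants_card_bounds (hG : G.Connected) {Δ B : ℕ}
    (hΔ : 2 ≤ Δ) (hB : 0 < B) (hBV : B < Fintype.card V)
    (hmax : ∀ v, G.degree v ≤ Δ) (hr : G.degree r ≤ Δ - 1) :
    ∃ x ≠ r, ((B : ℝ) - 1) / ((Δ : ℝ) - 1) < #(G.descendants r x) ∧
      #(G.descendants r x) ≤ B := by
  set a := ((B : ℝ) - 1) / ((Δ : ℝ) - 1)
  have hroot : a < #(G.descendants r r) := by
    have hΔ' : (1 : ℝ) ≤ (Δ : ℝ) - 1 := by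
      have : (2 : ℝ) ≤ Δ := by exact_mod_cast hΔ
      linarith
    have hB' : (0 : ℝ) ≤ (B : ℝ) - 1 := by
      have : (1 : ℝ) ≤ B := by exact_mod_cast hB
      linarith
    have : a ≤ (B : ℝ) - 1 := div_le_self hB' hΔ'
    have : (B : ℝ) < Fintype.card V := by exact_mod_cast hBV
    rw [descendants_root, card_univ]
    linarith
  obtain ⟨x, hxC, hmin⟩ := exists_min_image {x | a < #(G.descendants r x)}
    (fun x ↦ #(G.descendants r x)) ⟨r, mem_filter.2 ⟨mem_univ _, hroot⟩⟩
  have hle := hG.card_descendants_le_of_forall_children hΔ hB (hG.card_children_le hmax hr)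
    fun y hy ↦ not_lt.1 fun h ↦
      (card_lt_card (hG.descendants_ssubset_of_mem_children hy)).not_ge
        (hmin y (mem_filter.2 ⟨mem_univ _, h⟩))
  refine ⟨x, ?_, (mem_filter.1 hxC).2, hle⟩
  rintro rfl
  rw [descendants_root, card_univ] at hle
  omega

end SimpleGraph

theorem tree_split_general (Δ n B : ℕ) (hΔ : 2 ≤ Δ) (hB : 0 < B) (hBn : B < n)
    (V : Type) [Fintype V] [DecidableEq V] (G : SimpleGraph V) [DecidableRel G.Adj]
    (hcard : Fintype.card V = n) (htree : G.IsTree)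
    (hmaxdeg : ∀ v : V, G.degree v ≤ Δ)
    (v₀ : V) (hv₀ : G.degree v₀ ≤ Δ - 1) :
    ∃ V'' V' : Finset V,
      Disjoint V'' V' ∧ V'' ∪ V' = Finset.univ ∧
      V''.Nonempty ∧ V'.Nonempty ∧
      (G.induce (V'' : Set V)).Connected ∧ (G.induce (V' : Set V)).Connected ∧
      ((B : ℝ) - 1) / ((Δ : ℝ) - 1) < (V''.card : ℝ) ∧ V''.card ≤ B ∧ v₀ ∈ V' := by
  have hG := htree.connected
  obtain ⟨x, hxv₀, hlow, hup⟩ :=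
    hG.exists_descendants_card_bounds hΔ hB (hcard ▸ hBn) hmaxdeg hv₀
  have hv₀x : v₀ ∈ univ \ G.descendants v₀ x :=
    mem_sdiff.2 ⟨mem_univ _, hG.root_notMem_descendants hxv₀⟩
  exact ⟨G.descendants v₀ x, univ \ G.descendants v₀ x, disjoint_sdiff,
    union_sdiff_of_subset (subset_univ _), ⟨x, SimpleGraph.self_mem_descendants⟩, ⟨v₀, hv₀x⟩,
    hG.connected_induce_descendants, hG.connected_induce_compl_descendants hxv₀,
    hlow, hup, hv₀x⟩

/-- Lemma 9: a tree on `n ≥ 2` vertices with maximum degree at most `Δ`, rooted at a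
vertex `v₀` of degree at most `Δ - 1`, can be split into two complementary subtrees
`V''` and `V'` with `(B-1)/(Δ-1) < |V''| ≤ B` and `v₀ ∈ V'`. -/
theorem tree_split (Δ n B : ℕ) (hΔ : 2 ≤ Δ) (hn : 2 ≤ n) (hB : 0 < B) (hBn : B < n)
    (V : Type) [Fintype V] [DecidableEq V] (G : SimpleGraph V) [DecidableRel G.Adj]
    (hcard : Fintype.card V = n) (htree : G.IsTree)
    (hmaxdeg : ∀ v : V, G.degree v ≤ Δ)
    (v₀ : V) (hv₀ : G.degree v₀ ≤ Δ - 1) :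
    ∃ V'' V' : Finset V,
      Disjoint V'' V' ∧ V'' ∪ V' = Finset.univ ∧
      V''.Nonempty ∧ V'.Nonempty ∧
      (G.induce (V'' : Set V)).Connected ∧ (G.induce (V' : Set V)).Connected ∧
      ((B : ℝ) - 1) / ((Δ : ℝ) - 1) < (V''.card : ℝ) ∧ V''.card ≤ B ∧ v₀ ∈ V' :=
  tree_split_general Δ n B hΔ hB hBn V G hcard htree hmaxdeg v₀ hv₀
end

section
/- Let Δ ≥ 2 and B ≥ 1 be integers, and let G be a finite connected simple graph with maximum degree at most Δ and at least one vertex. Then the vertex set of G can be partitioned into nonempty parts, each inducing a connected subgraph of G, each of size at most B, such that all parts, except possibly one, have size strictly greater than (B−1)/(Δ−1). -/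
set_option linter.unusedSectionVars false
set_option maxHeartbeats 1600000

open Finset SimpleGraph

section ConnectedPartition

variable {V : Type} [Fintype V] [DecidableEq V] (G : SimpleGraph V)


/-- Reachability via a walk whose support stays in `s`. -/
def RW (s : Finset V) (u v : V) : Prop :=
  ∃ p : G.Walk u v, ∀ x ∈ p.support, x ∈ s

variable {G}

lemma rw_refl {s : Finset V} {u : V} (hu : u ∈ s) : RW G s u u :=
  ⟨SimpleGraph.Walk.nil, by simpa using hu⟩

lemma rw_symm {s : Finset V} {u v : V} (h : RW G s u v) : RW G s v u := by
  obtain ⟨p, hp⟩ := h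
  exact ⟨p.reverse, by simpa [SimpleGraph.Walk.support_reverse] using hp⟩

lemma rw_trans {s : Finset V} {u v w : V} (h : RW G s u v) (h' : RW G s v w) :
    RW G s u w := by
  obtain ⟨p, hp⟩ := h; obtain ⟨q, hq⟩ := h'
  refine ⟨p.append q, fun x hx => ?_⟩
  rcases (SimpleGraph.Walk.mem_support_append_iff _ _).1 hx with h | h
  exacts [hp x h, hq x h]

lemma rw_mono {s t : Finset V} (hst : s ⊆ t) {u v : V} (h : RW G s u v) : RW G t u v := by
  obtain ⟨p, hp⟩ := h; exact ⟨p, fun x hx => hst (hp x hx)⟩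

lemma rw_mem_left {s : Finset V} {u v : V} (h : RW G s u v) : u ∈ s := by
  obtain ⟨p, hp⟩ := h; exact hp u p.start_mem_support

lemma rw_mem_right {s : Finset V} {u v : V} (h : RW G s u v) : v ∈ s := by
  obtain ⟨p, hp⟩ := h; exact hp v p.end_mem_support

lemma rw_adj {s : Finset V} {u v : V} (h : G.Adj u v) (hu : u ∈ s) (hv : v ∈ s) :
    RW G s u v :=
  ⟨h.toWalk, by simp [hu, hv]⟩

/-- Connectivity of the induced subgraph on a finite set, walk form. -/
def ConnOn (G : SimpleGraph V) (s : Finset V) : Prop :=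
  s.Nonempty ∧ ∀ u ∈ s, ∀ v ∈ s, RW G s u v

lemma connOn_singleton (v : V) : ConnOn G {v} := by
  refine ⟨⟨v, by simp⟩, ?_⟩
  intro u hu w hw
  simp only [Finset.mem_singleton] at hu hw
  subst hu; subst hw; exact rw_refl (by simp)

lemma ConnOn.induce_connected {s : Finset V} (h : ConnOn G s) :
    (G.induce (s : Set V)).Connected := by
  obtain ⟨⟨a, ha⟩, hr⟩ := h
  apply G.induce_connected_of_patches a (by simpa using ha)
  intro v hv
  obtain ⟨p, hp⟩ := hr a ha v (by simpa using hv)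
  refine ⟨{x | x ∈ p.support}, fun x hx => by simpa using hp x hx,
    p.start_mem_support, p.end_mem_support, ?_⟩
  exact (p.connected_induce_support).preconnected _ _



/-- Every connected set with at least two vertices has a non-cut vertex. -/
lemma exists_noncut {s : Finset V} (h : ConnOn G s) (h2 : 2 ≤ s.card) :
    ∃ v ∈ s, ConnOn G (s.erase v) := by
  classical
  have hconn := h.induce_connected
  set H := G.induce (s : Set V) with hH
  obtain ⟨a, ha⟩ := h.1
  set u₀ : ↥(s : Set V) := ⟨a, by simpa using ha⟩ with hu₀
  obtain ⟨v, -, hvmax⟩ := Finset.exists_max_image (Finset.univ : Finset ↥(s : Set V))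
    (fun x => H.dist u₀ x) ⟨u₀, Finset.mem_univ _⟩
  have hvmax : ∀ x : ↥(s : Set V), H.dist u₀ x ≤ H.dist u₀ v :=
    fun x => hvmax x (Finset.mem_univ x)
  obtain ⟨b, hb, hba⟩ : ∃ b ∈ s, b ≠ a := by
    obtain ⟨x, hxs, y, hys, hxy⟩ := Finset.one_lt_card.1 h2
    rcases eq_or_ne x a with rfl | hne
    · exact ⟨y, hys, fun hc => hxy (by rw [hc])⟩
    · exact ⟨x, hxs, hne⟩
  have hvu : v ≠ u₀ := by
    intro hvu
    have hb' : (⟨b, by simpa using hb⟩ : ↥(s : Set V)) ≠ u₀ := by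
      simp [hu₀, Subtype.ext_iff, hba]
    have h1 : 0 < H.dist u₀ ⟨b, by simpa using hb⟩ :=
      hconn.pos_dist_of_ne (Ne.symm hb')
    have h2' := hvmax ⟨b, by simpa using hb⟩
    rw [hvu, SimpleGraph.dist_self] at h2'
    omega
  -- all other vertices are reachable from u₀ avoiding v
  have key : ∀ x : ↥(s : Set V), x ≠ v → ∃ p : H.Walk u₀ x, v ∉ p.support := by
    intro x hx
    obtain ⟨p, hp⟩ := hconn.exists_walk_length_eq_dist u₀ x
    refine ⟨p, fun hv => ?_⟩
    have hspec := p.take_spec hv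
    have hlen : (p.takeUntil v hv).length + (p.dropUntil v hv).length = p.length := by
      have := congrArg SimpleGraph.Walk.length hspec
      rwa [SimpleGraph.Walk.length_append] at this
    have h1 : H.dist u₀ v ≤ (p.takeUntil v hv).length := SimpleGraph.dist_le _
    have h2' : 1 ≤ (p.dropUntil v hv).length := by
      rcases Nat.eq_zero_or_pos (p.dropUntil v hv).length with h0 | h0
      · exact absurd (SimpleGraph.Walk.eq_of_length_eq_zero h0) (fun hh => hx hh.symm)
      · exact h0
    have h3 := hvmax x
    omega
  refine ⟨↑v, by simpa using v.2, ?_, ?_⟩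
  · have : (↑v : V) ∈ s := by simpa using v.2
    have := Finset.card_erase_of_mem this
    rw [← Finset.card_pos]; omega
  · intro x hx y hy
    obtain ⟨hxv, hxs⟩ := Finset.mem_erase.1 hx
    obtain ⟨hyv, hys⟩ := Finset.mem_erase.1 hy
    obtain ⟨p1, hp1⟩ := key ⟨x, by simpa using hxs⟩ (by simp [Subtype.ext_iff, hxv])
    obtain ⟨p2, hp2⟩ := key ⟨y, by simpa using hys⟩ (by simp [Subtype.ext_iff, hyv])
    let f : H →g G := ⟨Subtype.val, fun {c d} hcd => hcd⟩
    refine ⟨(p1.reverse.append p2).map f, fun z hz => ?_⟩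
    rw [SimpleGraph.Walk.support_map] at hz
    obtain ⟨z', hz', rfl⟩ := List.mem_map.1 hz
    have hz'v : z' ≠ v := by
      rcases (SimpleGraph.Walk.mem_support_append_iff _ _).1 hz' with hh | hh
      · rw [SimpleGraph.Walk.support_reverse, List.mem_reverse] at hh
        exact fun hzz => hp1 (hzz ▸ hh)
      · exact fun hzz => hp2 (hzz ▸ hh)
    exact Finset.mem_erase.2 ⟨fun hc => hz'v (Subtype.ext hc), Finset.mem_coe.1 z'.2⟩

/-- Boundary edge: a walk in `A` from inside `S` to outside `S` crosses the boundary. -/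
lemma exists_boundary {A S : Finset V} {v : V} (hv : v ∉ S) :
    ∀ {u : V} (p : G.Walk u v), (∀ x ∈ p.support, x ∈ A) → u ∈ S →
      ∃ w ∈ S, ∃ z ∈ A, z ∉ S ∧ G.Adj w z := by
  intro u p
  induction p with
  | nil => exact fun _ hu => absurd hu hv
  | @cons a b c hab q ih =>
    intro hp hu
    by_cases hb : b ∈ S
    · exact ih hv (fun x hx => hp x (by simp [hx])) hb
    · exact ⟨a, hu, b, hp b (by simp), hb, hab⟩

/-- A walk to `w` inside `S` yields a neighbor of `w` reachable in `S.erase w`. -/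
lemma exists_adj_reach {S : Finset V} {w : V} :
    ∀ {u : V} (p : G.Walk u w), u ≠ w → (∀ x ∈ p.support, x ∈ S) →
      ∃ y ∈ S.erase w, G.Adj y w ∧ RW G (S.erase w) u y := by
  intro u p
  induction p with
  | nil => exact fun h _ => absurd rfl h
  | @cons a b c hab q ih =>
    intro hu hp
    have ha : a ∈ S.erase c := Finset.mem_erase.2 ⟨hu, hp a (by simp)⟩
    by_cases hbw : b = c
    · subst hbw
      exact ⟨a, ha, hab, rw_refl ha⟩
    · obtain ⟨y, hy, hyw, hrw⟩ := ih hbw (fun x hx => hp x (by simp [hx]))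
      have hb : b ∈ S.erase c := Finset.mem_erase.2 ⟨hbw, hp b (by simp)⟩
      exact ⟨y, hy, hyw, rw_trans (rw_adj hab ha hb) hrw⟩

open scoped Classical in
/-- The reachability component of `u` inside `E`. -/
noncomputable def comp (G : SimpleGraph V) (E : Finset V) (u : V) : Finset V :=
  E.filter (fun x => RW G E u x)

lemma mem_comp {E : Finset V} {u x : V} : x ∈ comp G E u ↔ x ∈ E ∧ RW G E u x := by
  classical
  rw [comp, Finset.mem_filter]

lemma comp_subset {E : Finset V} {u : V} : comp G E u ⊆ E := fun x hx => (mem_comp.1 hx).1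

lemma self_mem_comp {E : Finset V} {u : V} (hu : u ∈ E) : u ∈ comp G E u :=
  mem_comp.2 ⟨hu, rw_refl hu⟩

lemma comp_eq_of_mem {E : Finset V} {u x : V} (hx : x ∈ comp G E u) :
    comp G E x = comp G E u := by
  obtain ⟨hxE, hux⟩ := mem_comp.1 hx
  ext y
  simp only [mem_comp]
  exact ⟨fun ⟨hyE, h⟩ => ⟨hyE, rw_trans hux h⟩,
    fun ⟨hyE, h⟩ => ⟨hyE, rw_trans (rw_symm hux) h⟩⟩

lemma rw_comp_of_mem {E : Finset V} {u x : V} (hx : x ∈ comp G E u) :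
    RW G (comp G E u) u x := by
  obtain ⟨hxE, p, hp⟩ := mem_comp.1 hx
  refine ⟨p, fun z hz => mem_comp.2 ⟨hp z hz, ?_⟩⟩
  exact ⟨p.takeUntil z hz, fun y hy => hp y (p.support_takeUntil_subset hz hy)⟩

lemma connOn_comp {E : Finset V} {u : V} (hu : u ∈ E) : ConnOn G (comp G E u) := by
  refine ⟨⟨u, self_mem_comp hu⟩, fun x hx y hy => ?_⟩
  exact rw_trans (rw_symm (rw_comp_of_mem hx)) (rw_comp_of_mem hy)

/-- The splitting lemma. -/
lemma split_lemma [DecidableRel G.Adj] {Δ : ℕ} (hΔ : 2 ≤ Δ)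
    (hmax : ∀ v : V, G.degree v ≤ Δ) {m : ℕ} (hm : 1 ≤ m) {A : Finset V}
    (hA : ConnOn G A) (hcard : m + 1 ≤ A.card) :
    ∃ S ⊆ A, S.Nonempty ∧ ConnOn G S ∧ (A \ S).Nonempty ∧ ConnOn G (A \ S) ∧
      m ≤ S.card ∧ S.card ≤ 1 + (Δ - 1) * (m - 1) := by
  classical
  -- the family of candidate sets
  set F : Finset (Finset V) := A.powerset.filter
    (fun S => S.Nonempty ∧ ConnOn G S ∧ (A \ S).Nonempty ∧ ConnOn G (A \ S) ∧ m ≤ S.card)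
    with hF
  have hmemF : ∀ S : Finset V, S ∈ F ↔ S ⊆ A ∧ S.Nonempty ∧ ConnOn G S ∧
      (A \ S).Nonempty ∧ ConnOn G (A \ S) ∧ m ≤ S.card := by
    intro S; rw [hF, Finset.mem_filter, Finset.mem_powerset]
  -- F is nonempty, via a non-cut vertex
  obtain ⟨r, hr, hconn_er⟩ := exists_noncut hA (by omega)
  have hFne : F.Nonempty := by
    refine ⟨A.erase r, (hmemF _).2 ⟨Finset.erase_subset _ _, ?_, hconn_er, ?_, ?_, ?_⟩⟩
    · rw [← Finset.card_pos, Finset.card_erase_of_mem hr]; omega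
    · exact ⟨r, Finset.mem_sdiff.2 ⟨hr, Finset.notMem_erase _ _⟩⟩
    · have : A \ A.erase r = {r} := by
        ext x
        simp only [Finset.mem_sdiff, Finset.mem_erase, Finset.mem_singleton]
        constructor
        · rintro ⟨hx, hx2⟩; by_contra hne; exact hx2 ⟨hne, hx⟩
        · rintro rfl; exact ⟨hr, fun h => h.1 rfl⟩
      rw [this]; exact connOn_singleton r
    · rw [Finset.card_erase_of_mem hr]; omega
  obtain ⟨S, hSF, hSmin⟩ := F.exists_min_image Finset.card hFne
  obtain ⟨hSA, hSne, hSconn, hASne, hASconn, hSm⟩ := (hmemF S).1 hSF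
  refine ⟨S, hSA, hSne, hSconn, hASne, hASconn, hSm, ?_⟩
  -- the size bound, by contradiction
  by_contra hbig
  push_neg at hbig
  have hS2 : 2 ≤ S.card := by
    have : (Δ - 1) * (m - 1) + 1 ≥ 1 := by omega
    omega
  -- find a boundary vertex w ∈ S with neighbor z outside S
  obtain ⟨s₀, hs₀⟩ := hSne
  obtain ⟨t₀, ht₀⟩ := hASne
  have ht₀' := Finset.mem_sdiff.1 ht₀
  obtain ⟨pw, hpw⟩ := hA.2 s₀ (hSA hs₀) t₀ ht₀'.1
  obtain ⟨w, hwS, z, hzA, hzS, hwz⟩ := exists_boundary ht₀'.2 pw hpw hs₀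
  set E : Finset V := S.erase w with hE
  set N : Finset V := E ∩ G.neighborFinset w with hN
  -- every vertex of E is in the component of some y ∈ N
  have key1 : ∀ u ∈ E, ∃ y ∈ N, u ∈ comp G E y := by
    intro u hu
    obtain ⟨huw, huS⟩ := Finset.mem_erase.1 hu
    obtain ⟨q, hq⟩ := hSconn.2 u huS w hwS
    obtain ⟨y, hyE, hyw, hrw⟩ := exists_adj_reach q huw hq
    refine ⟨y, ?_, ?_⟩
    · rw [hN, Finset.mem_inter]
      exact ⟨hyE, (G.mem_neighborFinset w y).2 hyw.symm⟩
    · exact mem_comp.2 ⟨hu, rw_symm hrw⟩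
  -- each component is small, else it would contradict minimality
  have key2 : ∀ y ∈ N, (comp G E y).card ≤ m - 1 := by
    intro y hyN
    by_contra hc
    set C : Finset V := comp G E y with hC
    have hyE : y ∈ E := (Finset.mem_inter.1 hyN).1
    have hyadj : G.Adj w y := (G.mem_neighborFinset w y).1 (Finset.mem_inter.1 hyN).2
    have hCE : C ⊆ E := comp_subset
    have hCS : C ⊆ S := hCE.trans (Finset.erase_subset _ _)
    have hCm : m ≤ C.card := by omega
    have hwC : w ∉ C := fun h => (Finset.mem_erase.1 (hCE h)).1 rfl
    have hwAC : w ∈ A \ C := Finset.mem_sdiff.2 ⟨hSA hwS, hwC⟩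
    -- connectivity of A \ C : every vertex reaches w
    have hreach : ∀ p ∈ A \ C, RW G (A \ C) p w := by
      intro p hp
      obtain ⟨hpA, hpC⟩ := Finset.mem_sdiff.1 hp
      by_cases hpS : p ∈ S
      · rcases eq_or_ne p w with rfl | hpw'
        · exact rw_refl hwAC
        · -- p ∈ E \ C ; use its component
          have hpE : p ∈ E := Finset.mem_erase.2 ⟨hpw', hpS⟩
          obtain ⟨y', hy'N, hpcomp⟩ := key1 p hpE
          have hy'E : y' ∈ E := (Finset.mem_inter.1 hy'N).1
          have hy'adj : G.Adj w y' := (G.mem_neighborFinset w y').1 (Finset.mem_inter.1 hy'N).2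
          have hdisj : ∀ x ∈ comp G E y', x ∉ C := by
            intro x hx hxC
            have e1 : comp G E x = comp G E y' := comp_eq_of_mem hx
            have e2 : comp G E x = comp G E y := comp_eq_of_mem hxC
            rw [e2] at e1
            apply hpC
            rw [hC, e1]
            exact hpcomp
          have hsub : comp G E y' ⊆ A \ C := by
            intro x hx
            exact Finset.mem_sdiff.2 ⟨hSA ((comp_subset.trans (Finset.erase_subset _ _)) hx),
              hdisj x hx⟩
          have h1 : RW G (A \ C) p y' :=
            rw_mono hsub (rw_symm (rw_comp_of_mem hpcomp))
          exact rw_trans h1 (rw_adj hy'adj.symm (hsub (self_mem_comp hy'E)) hwAC)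
      · -- p outside S : go through A \ S and the edge z-w
        have hpAS : p ∈ A \ S := Finset.mem_sdiff.2 ⟨hpA, hpS⟩
        have hzAS : z ∈ A \ S := Finset.mem_sdiff.2 ⟨hzA, hzS⟩
        have hsub : A \ S ⊆ A \ C := Finset.sdiff_subset_sdiff le_rfl hCS
        have h1 : RW G (A \ C) p z := rw_mono hsub (hASconn.2 p hpAS z hzAS)
        exact rw_trans h1 (rw_adj hwz.symm (hsub hzAS) hwAC)
    have hACconn : ConnOn G (A \ C) := by
      refine ⟨⟨w, hwAC⟩, fun u hu v hv => ?_⟩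
      exact rw_trans (hreach u hu) (rw_symm (hreach v hv))
    -- C ∈ F and C is smaller than S: contradiction
    have hCF : C ∈ F := (hmemF C).2 ⟨hCS.trans hSA, ⟨y, self_mem_comp hyE⟩, connOn_comp hyE,
      ⟨w, hwAC⟩, hACconn, hCm⟩
    have hCcard : C.card < S.card := by
      have h1 : C.card ≤ E.card := Finset.card_le_card hCE
      have h2 : E.card = S.card - 1 := by rw [hE, Finset.card_erase_of_mem hwS]
      omega
    exact absurd (hSmin C hCF) (by omega)
  -- counting
  have hcover : E ⊆ N.biUnion (fun y => comp G E y) := by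
    intro u hu
    obtain ⟨y, hyN, hy⟩ := key1 u hu
    exact Finset.mem_biUnion.2 ⟨y, hyN, hy⟩
  have hNcard : N.card ≤ Δ - 1 := by
    have hzN : z ∈ G.neighborFinset w := (G.mem_neighborFinset w z).2 hwz
    have hsub : N ⊆ (G.neighborFinset w).erase z := by
      intro x hx
      obtain ⟨hxE, hxnb⟩ := Finset.mem_inter.1 hx
      refine Finset.mem_erase.2 ⟨fun h => hzS (((Finset.erase_subset _ _) (h ▸ hxE))), hxnb⟩
    have h1 := Finset.card_le_card hsub
    rw [Finset.card_erase_of_mem hzN] at h1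
    have h2 : (G.neighborFinset w).card ≤ Δ := hmax w
    omega
  have hEcard : E.card ≤ (Δ - 1) * (m - 1) := by
    calc E.card ≤ (N.biUnion (fun y => comp G E y)).card := Finset.card_le_card hcover
      _ ≤ ∑ y ∈ N, (comp G E y).card := Finset.card_biUnion_le
      _ ≤ N.card * (m - 1) := Finset.sum_le_card_nsmul _ _ _ (fun y hy => key2 y hy)
      _ ≤ (Δ - 1) * (m - 1) := Nat.mul_le_mul_right _ hNcard
  have : E.card = S.card - 1 := by rw [hE, Finset.card_erase_of_mem hwS]
  omega

/-- The partition lemma, by strong induction on the size of the set. -/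
lemma partition_lemma [DecidableRel G.Adj] {Δ B : ℕ} (hΔ : 2 ≤ Δ) (hB : 1 ≤ B)
    (hmax : ∀ v : V, G.degree v ≤ Δ) :
    ∀ (n : ℕ) (A : Finset V), A.card ≤ n → A.Nonempty → ConnOn G A →
    ∃ P : Finset (Finset V),
      (∀ s ∈ P, s.Nonempty) ∧ (∀ s ∈ P, s ⊆ A) ∧
      (∀ v ∈ A, ∃! s, s ∈ P ∧ v ∈ s) ∧
      (∀ s ∈ P, ConnOn G s) ∧ (∀ s ∈ P, s.card ≤ B) ∧
      (∀ s ∈ P, ∀ t ∈ P, s ≠ t →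
        (B - 1) / (Δ - 1) + 1 ≤ s.card ∨ (B - 1) / (Δ - 1) + 1 ≤ t.card) := by
  intro n
  induction n with
  | zero =>
    intro A hA0 hAne _
    exact absurd (Finset.card_pos.2 hAne) (by omega)
  | succ n ih =>
    intro A hAn hAne hAconn
    set m : ℕ := (B - 1) / (Δ - 1) + 1 with hm
    by_cases hAB : A.card ≤ B
    · -- single part
      refine ⟨{A}, ?_, ?_, ?_, ?_, ?_, ?_⟩
      · intro s hs; rw [Finset.mem_singleton] at hs; subst hs; exact hAne
      · intro s hs; rw [Finset.mem_singleton] at hs; subst hs; exact Finset.Subset.refl _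
      · intro v hv
        refine ⟨A, ⟨Finset.mem_singleton_self A, hv⟩, ?_⟩
        rintro t ⟨ht, -⟩; rwa [Finset.mem_singleton] at ht
      · intro s hs; rw [Finset.mem_singleton] at hs; subst hs; exact hAconn
      · intro s hs; rw [Finset.mem_singleton] at hs; subst hs; exact hAB
      · intro s hs t ht hst
        rw [Finset.mem_singleton] at hs ht
        exact absurd (hs.trans ht.symm) hst
    · -- split off one piece and recurse
      have hdiv : (B - 1) / (Δ - 1) ≤ B - 1 := Nat.div_le_self _ _
      have hmul : ((B - 1) / (Δ - 1)) * (Δ - 1) ≤ B - 1 := Nat.div_mul_le_self _ _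
      have hmB : (B - 1) / (Δ - 1) + 1 ≤ B := by omega
      have hcard2 : (B - 1) / (Δ - 1) + 1 + 1 ≤ A.card := by omega
      obtain ⟨S, hSA, hSne, hSconn, hRne, hRconn, hSm, hSbound⟩ :=
        split_lemma (G := G) hΔ hmax (m := (B - 1) / (Δ - 1) + 1) (Nat.succ_le_succ (Nat.zero_le _)) hAconn hcard2
      rw [Nat.add_sub_cancel, Nat.mul_comm] at hSbound
      have hSB : S.card ≤ B := by omega
      set R : Finset V := A \ S with hR
      have hRcard : R.card ≤ n := by
        have h1 : R.card = A.card - S.card := Finset.card_sdiff_of_subset hSA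
        have h2 : 1 ≤ S.card := Finset.card_pos.2 hSne
        omega
      obtain ⟨P', hP'ne, hP'sub, hP'uniq, hP'conn, hP'B, hP'big⟩ := ih R hRcard hRne hRconn
      have hSnotP' : S ∉ P' := by
        intro hc
        obtain ⟨x, hx⟩ := hSne
        have := (hP'sub S hc) hx
        exact (Finset.mem_sdiff.1 this).2 hx
      refine ⟨insert S P', ?_, ?_, ?_, ?_, ?_, ?_⟩
      · intro s hs
        rcases Finset.mem_insert.1 hs with rfl | hs
        exacts [hSne, hP'ne s hs]
      · intro s hs
        rcases Finset.mem_insert.1 hs with rfl | hs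
        exacts [hSA, (hP'sub s hs).trans (Finset.sdiff_subset)]
      · intro v hv
        by_cases hvS : v ∈ S
        · refine ⟨S, ⟨Finset.mem_insert_self _ _, hvS⟩, ?_⟩
          rintro t ⟨ht, hvt⟩
          rcases Finset.mem_insert.1 ht with rfl | ht
          · rfl
          · exact absurd ((hP'sub t ht) hvt) (fun h => (Finset.mem_sdiff.1 h).2 hvS)
        · have hvR : v ∈ R := Finset.mem_sdiff.2 ⟨hv, hvS⟩
          obtain ⟨t₀, ⟨ht₀, hvt₀⟩, ht₀u⟩ := hP'uniq v hvR
          refine ⟨t₀, ⟨Finset.mem_insert_of_mem ht₀, hvt₀⟩, ?_⟩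
          rintro t ⟨ht, hvt⟩
          rcases Finset.mem_insert.1 ht with rfl | ht
          · exact absurd hvt hvS
          · exact ht₀u t ⟨ht, hvt⟩
      · intro s hs
        rcases Finset.mem_insert.1 hs with rfl | hs
        exacts [hSconn, hP'conn s hs]
      · intro s hs
        rcases Finset.mem_insert.1 hs with rfl | hs
        exacts [hSB, hP'B s hs]
      · intro s hs t ht hst
        rcases Finset.mem_insert.1 hs with rfl | hs
        · exact Or.inl hSm
        · rcases Finset.mem_insert.1 ht with rfl | ht
          · exact Or.inr hSm
          · exact hP'big s hs t ht hst


end ConnectedPartition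

/-- A connected graph of maximum degree at most `Δ` can be partitioned into nonempty
connected parts of size at most `B`, all of which, except possibly one, have size
strictly greater than `(B-1)/(Δ-1)`. -/
theorem connected_partition_bounded_pieces (Δ B : ℕ) (hΔ : 2 ≤ Δ) (hB : 1 ≤ B)
    (V : Type) [Fintype V] [DecidableEq V] [Nonempty V]
    (G : SimpleGraph V) [DecidableRel G.Adj]
    (hconn : G.Connected) (hmaxdeg : ∀ v : V, G.degree v ≤ Δ) :
    ∃ P : Finset (Finset V),
      (∀ s ∈ P, s.Nonempty) ∧
      (∀ v : V, ∃! s, s ∈ P ∧ v ∈ s) ∧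
      (∀ s ∈ P, (G.induce (s : Set V)).Connected) ∧
      (∀ s ∈ P, s.card ≤ B) ∧
      (∀ s ∈ P, ∀ t ∈ P, s ≠ t →
        ((B : ℝ) - 1) / ((Δ : ℝ) - 1) < (s.card : ℝ) ∨
        ((B : ℝ) - 1) / ((Δ : ℝ) - 1) < (t.card : ℝ)) := by
  classical
  have hunivconn : ConnOn G (Finset.univ : Finset V) := by
    refine ⟨Finset.univ_nonempty, fun u _ v _ => ?_⟩
    obtain ⟨p⟩ := hconn.preconnected u v
    exact ⟨p, fun x _ => Finset.mem_univ x⟩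
  obtain ⟨P, hPne, -, hPuniq, hPconn, hPB, hPbig⟩ :=
    partition_lemma hΔ hB hmaxdeg (Finset.univ.card) Finset.univ le_rfl
      Finset.univ_nonempty hunivconn
  have hreal : ∀ k : ℕ, (B - 1) / (Δ - 1) + 1 ≤ k →
      ((B : ℝ) - 1) / ((Δ : ℝ) - 1) < (k : ℝ) := by
    intro k hk
    have hΔ1 : 1 ≤ Δ := by omega
    have hΔ' : (0 : ℝ) < (Δ : ℝ) - 1 := by
      have : (2 : ℝ) ≤ (Δ : ℝ) := by exact_mod_cast hΔ
      linarith
    rw [div_lt_iff₀ hΔ']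
    have hb : 0 < Δ - 1 := by omega
    have h1 : B - 1 < k * (Δ - 1) :=
      lt_of_lt_of_le ((Nat.div_lt_iff_lt_mul hb).1 (Nat.lt_succ_self _))
        (Nat.mul_le_mul_right _ hk)
    have h2 : ((B - 1 : ℕ) : ℝ) < ((k * (Δ - 1) : ℕ) : ℝ) := by exact_mod_cast h1
    push_cast [Nat.cast_sub hB, Nat.cast_sub hΔ1] at h2
    linarith
  refine ⟨P, hPne, fun v => hPuniq v (Finset.mem_univ v),
    fun s hs => (hPconn s hs).induce_connected, hPB, fun s hs t ht hst => ?_⟩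
  rcases hPbig s hs t ht hst with h | h
  · exact Or.inl (hreal _ h)
  · exact Or.inr (hreal _ h)
end

section
/- Let n be a positive integer and let p ∈ (0,1), and set λ = −n·log(1−p) (natural logarithm). Then a Binomial(n, p) random variable is stochastically dominated by a Poisson random variable with mean λ: for every natural number k, Pr(Binomial(n,p) ≥ k) ≤ Pr(Poisson(λ) ≥ k). -/
/-! With `μ = -log (1 - p)` a Bernoulli(p) variable is dominated by a Po(μ) variable: both vanish
with probability `1 - p`, and otherwise the Poisson variable is at least `1`. Adding independent
copies of these to `Bin(n, p)` and `Po(n μ)` preserves the domination of the lower tails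
`P(X < k)`, which gives `P(Po(n μ) < k) ≤ P(Bin(n, p) < k)` by induction on `n`; on the Poisson
side this uses `Po(a) ∗ Po(b) = Po(a + b)`, written out on the mass functions. -/

open Finset Real
open scoped Nat

theorem HasSum.ite_le {G : Type*} [AddCommGroup G] [TopologicalSpace G] [IsTopologicalAddGroup G]
    {f : ℕ → G} {a : G} (hf : HasSum f a) (k : ℕ) :
    HasSum (fun j ↦ if k ≤ j then f j else 0) (a - ∑ j ∈ range k, f j) := by
  have hhead : HasSum (fun j ↦ if j < k then f j else 0)
      (∑ j ∈ range k, if j < k then f j else 0) :=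
    hasSum_sum_of_ne_finset_zero fun j hj ↦ if_neg (by simpa using hj)
  rw [sum_congr rfl fun j hj ↦ if_pos (mem_range.mp hj)] at hhead
  convert hf.sub hhead using 1
  ext j
  by_cases h : k ≤ j <;> simp [h, not_lt.mpr, lt_of_not_ge]

noncomputable def poissonProb (r : ℝ) (j : ℕ) : ℝ := exp (-r) * r ^ j / j !

/-- `P(X < k)` for `X ~ Po(r)`; likewise `binomialCDF`. -/
noncomputable def poissonCDF (r : ℝ) (k : ℕ) : ℝ := ∑ j ∈ range k, poissonProb r j

def binomialProb (n : ℕ) (p : ℝ) (j : ℕ) : ℝ := n.choose j * p ^ j * (1 - p) ^ (n - j)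

def binomialCDF (n : ℕ) (p : ℝ) (k : ℕ) : ℝ := ∑ j ∈ range k, binomialProb n p j

lemma poissonProb_nonneg {r : ℝ} (hr : 0 ≤ r) (j : ℕ) : 0 ≤ poissonProb r j := by
  unfold poissonProb; positivity

lemma hasSum_poissonProb (r : ℝ) : HasSum (poissonProb r) 1 := by
  have h := (NormedSpace.expSeries_div_hasSum_exp r).mul_left (exp (-r))
  rw [← exp_eq_exp_ℝ, ← exp_add, neg_add_cancel, exp_zero] at h
  have hprob : poissonProb r = fun j ↦ exp (-r) * (r ^ j / j !) :=
    funext fun j ↦ mul_div_assoc _ _ _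
  rwa [hprob]

lemma poissonCDF_le_one {r : ℝ} (hr : 0 ≤ r) (k : ℕ) : poissonCDF r k ≤ 1 :=
  sum_le_hasSum _ (fun j _ ↦ poissonProb_nonneg hr j) (hasSum_poissonProb r)

lemma poissonProb_add (r s : ℝ) (j : ℕ) :
    poissonProb (r + s) j = ∑ i ∈ range (j + 1), poissonProb r i * poissonProb s (j - i) := by
  simp only [poissonProb, add_pow, neg_add, exp_add, mul_sum, sum_div]
  refine sum_congr rfl fun i hi ↦ ?_
  have hij : i ≤ j := Nat.lt_succ_iff.mp (mem_range.mp hi)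
  rw [Nat.cast_choose ℝ hij]
  field_simp

lemma poissonCDF_add (r s : ℝ) (k : ℕ) :
    poissonCDF (r + s) k = ∑ i ∈ range k, poissonProb r i * poissonCDF s (k - i) := by
  simp only [poissonCDF, poissonProb_add, mul_sum, range_eq_Ico]
  rw [← sum_Ico_Ico_comm]
  refine sum_congr rfl fun i _ ↦ ?_
  rw [sum_Ico_eq_sum_range]
  simp only [add_tsub_cancel_left, range_eq_Ico]

/-- The `Po(s)` summand vanishes with probability `exp (-s)` and is otherwise at least `1`. -/
lemma poissonCDF_add_succ_le {r s : ℝ} (hr : 0 ≤ r) (hs : 0 ≤ s) (k : ℕ) :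
    poissonCDF (r + s) (k + 1) ≤ poissonCDF r k + exp (-s) * poissonProb r k := by
  have hone : poissonCDF s 1 = exp (-s) := by simp [poissonCDF, poissonProb]
  rw [poissonCDF_add, sum_range_succ, Nat.add_sub_cancel_left, hone, mul_comm (poissonProb r k)]
  show _ ≤ ∑ i ∈ range k, poissonProb r i + _
  gcongr with i
  exact mul_le_of_le_one_right (poissonProb_nonneg hr i) (poissonCDF_le_one hs _)

lemma binomialProb_eq_zero_of_lt {n j : ℕ} (p : ℝ) (h : n < j) : binomialProb n p j = 0 := by
  simp [binomialProb, Nat.choose_eq_zero_of_lt h]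

lemma hasSum_binomialProb (n : ℕ) (p : ℝ) : HasSum (binomialProb n p) 1 := by
  have hsum : ∑ j ∈ range (n + 1), binomialProb n p j = 1 := by
    have h := add_pow p (1 - p) n
    rw [add_sub_cancel, one_pow] at h
    exact (sum_congr rfl fun j _ ↦ by unfold binomialProb; ring).trans h.symm
  rw [← hsum]
  exact hasSum_sum_of_ne_finset_zero fun j hj ↦
    binomialProb_eq_zero_of_lt p (by simpa using hj)

lemma binomialProb_succ_zero (n : ℕ) (p : ℝ) :
    binomialProb (n + 1) p 0 = (1 - p) * binomialProb n p 0 := by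
  simp [binomialProb, pow_succ, mul_comm]

lemma binomialProb_succ_succ (n : ℕ) (p : ℝ) (j : ℕ) :
    binomialProb (n + 1) p (j + 1) =
      p * binomialProb n p j + (1 - p) * binomialProb n p (j + 1) := by
  rcases lt_or_ge n (j + 1) with h | h
  · rw [binomialProb_eq_zero_of_lt p h]
    simp only [binomialProb, Nat.choose_succ_succ', Nat.choose_eq_zero_of_lt h, Nat.succ_sub_succ]
    push_cast; ring
  · obtain ⟨d, rfl⟩ := Nat.exists_eq_add_of_le h
    simp only [binomialProb, Nat.choose_succ_succ', show j + 1 + d + 1 - (j + 1) = d + 1 by omega,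
      show j + 1 + d - j = d + 1 by omega, show j + 1 + d - (j + 1) = d by omega]
    push_cast; ring

lemma binomialCDF_succ_succ (n : ℕ) (p : ℝ) (k : ℕ) :
    binomialCDF (n + 1) p (k + 1) =
      p * binomialCDF n p k + (1 - p) * binomialCDF n p (k + 1) := by
  simp only [binomialCDF, sum_range_succ' _ k, binomialProb_succ_zero, binomialProb_succ_succ,
    sum_add_distrib, ← mul_sum]
  ring

lemma poissonCDF_le_binomialCDF {p μ : ℝ} (hp : 0 ≤ p) (hμ : exp (-μ) ≤ 1 - p) (n k : ℕ) :
    poissonCDF (n * μ) k ≤ binomialCDF n p k := by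
  have hq : 0 ≤ 1 - p := (exp_pos _).le.trans hμ
  have hμ0 : 0 ≤ μ := neg_nonpos.mp (exp_le_one_iff.mp (hμ.trans (by linarith)))
  induction n generalizing k with
  | zero => cases k <;> simp [poissonCDF, binomialCDF, poissonProb, binomialProb, sum_range_succ']
  | succ n ih =>
    cases k with
    | zero => simp [poissonCDF, binomialCDF]
    | succ k =>
      have hnμ : 0 ≤ n * μ := by positivity
      calc poissonCDF ((n + 1 : ℕ) * μ) (k + 1)
          ≤ poissonCDF (n * μ) k + exp (-μ) * poissonProb (n * μ) k := by
            rw [Nat.cast_succ, add_one_mul]; exact poissonCDF_add_succ_le hnμ hμ0 k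
        _ ≤ poissonCDF (n * μ) k + (1 - p) * poissonProb (n * μ) k := by
            gcongr; exact poissonProb_nonneg hnμ k
        _ = p * poissonCDF (n * μ) k + (1 - p) * poissonCDF (n * μ) (k + 1) := by
            rw [poissonCDF, poissonCDF, sum_range_succ]; ring
        _ ≤ p * binomialCDF n p k + (1 - p) * binomialCDF n p (k + 1) := by
            gcongr <;> exact ih _
        _ = binomialCDF (n + 1) p (k + 1) := (binomialCDF_succ_succ n p k).symm

theorem binomial_dominated_by_poisson_general (n : ℕ) (p : ℝ)
    (hp : 0 < p) (hp1 : p < 1) (lam : ℝ) (hlam : lam = -(n : ℝ) * Real.log (1 - p)) :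
    ∀ k : ℕ,
      (∑ j ∈ Finset.range (n + 1),
          if k ≤ j then (n.choose j : ℝ) * p ^ j * (1 - p) ^ (n - j) else 0)
        ≤ ∑' j : ℕ,
            if k ≤ j then Real.exp (-lam) * lam ^ j / (Nat.factorial j : ℝ) else 0 := by
  intro k
  have hexp : exp (-(-log (1 - p))) = 1 - p := by rw [neg_neg, exp_log (by linarith)]
  have hlam' : lam = n * -log (1 - p) := by rw [hlam]; ring
  have hbinom : (∑ j ∈ range (n + 1), if k ≤ j then binomialProb n p j else 0)
      = 1 - binomialCDF n p k :=
    (hasSum_sum_of_ne_finset_zero fun j hj ↦ by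
      simp [binomialProb_eq_zero_of_lt p (by simpa using hj : n < j)]).unique
      ((hasSum_binomialProb n p).ite_le k)
  have hpoisson : (∑' j, if k ≤ j then poissonProb lam j else 0) = 1 - poissonCDF lam k :=
    ((hasSum_poissonProb lam).ite_le k).tsum_eq
  change (∑ j ∈ range (n + 1), if k ≤ j then binomialProb n p j else 0)
    ≤ ∑' j, if k ≤ j then poissonProb lam j else 0
  rw [hbinom, hpoisson, hlam']
  linarith [poissonCDF_le_binomialCDF hp.le hexp.le n k]

/-- A `Binomial(n,p)` random variable is stochastically dominated by a Poisson random
variable with mean `λ = -n·log(1-p)`: for every `k`,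
`Pr(Binomial(n,p) ≥ k) ≤ Pr(Poisson(λ) ≥ k)`. -/
theorem binomial_dominated_by_poisson (n : ℕ) (hn : 0 < n) (p : ℝ)
    (hp : 0 < p) (hp1 : p < 1) (lam : ℝ) (hlam : lam = -(n : ℝ) * Real.log (1 - p)) :
    ∀ k : ℕ,
      (∑ j ∈ Finset.range (n + 1),
          if k ≤ j then (n.choose j : ℝ) * p ^ j * (1 - p) ^ (n - j) else 0)
        ≤ ∑' j : ℕ,
            if k ≤ j then Real.exp (-lam) * lam ^ j / (Nat.factorial j : ℝ) else 0 :=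
  binomial_dominated_by_poisson_general n p hp hp1 lam hlam
end

section
/- For every integer ℓ ≥ 1, the number of functions c from the vertex set of the 3×ℓ grid graph to {1, 2} such that each of the two color classes c⁻¹(1) and c⁻¹(2) induces a connected (possibly empty) subgraph is strictly greater than 2^ℓ. -/
/-- The `k × ℓ` grid graph: vertices `{0,…,k-1} × {0,…,ℓ-1}`, two vertices adjacent
iff they differ by exactly 1 in one coordinate and agree in the other. -/
def gridGraph (k l : ℕ) : SimpleGraph (Fin k × Fin l) :=
  SimpleGraph.fromRel (fun a b =>
    (a.1 = b.1 ∧ a.2.val + 1 = b.2.val) ∨ (a.2 = b.2 ∧ a.1.val + 1 = b.1.val))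

lemma gg_adj_row {l : ℕ} (r : Fin 3) (j : ℕ) (h : j + 1 < l) :
    (gridGraph 3 l).Adj (r, ⟨j, Nat.lt_of_succ_lt h⟩) (r, ⟨j + 1, h⟩) := by
  constructor
  · intro he
    have := congrArg (fun p => (Prod.snd p : Fin l).val) he
    simp at this
  · left; left; exact ⟨rfl, rfl⟩

lemma gg_adj_col {l : ℕ} (i i' : Fin 3) (j : Fin l) (h : i.val + 1 = i'.val) :
    (gridGraph 3 l).Adj (i, j) (i', j) := by
  constructor
  · intro he
    have := congrArg (fun p => (Prod.fst p : Fin 3).val) he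
    simp at this; omega
  · left; right; exact ⟨rfl, h⟩

lemma induce_adj' {l : ℕ} {S : Set (Fin 3 × Fin l)} {u v : S}
    (h : (gridGraph 3 l).Adj u.val v.val) : ((gridGraph 3 l).induce S).Adj u v := h

lemma row_reach {l : ℕ} (S : Set (Fin 3 × Fin l)) (r : Fin 3)
    (hr : ∀ j, (r, j) ∈ S) (j j' : Fin l) :
    ((gridGraph 3 l).induce S).Reachable ⟨(r, j), hr j⟩ ⟨(r, j'), hr j'⟩ := by
  have hpos : 0 < l := j.pos
  have key : ∀ n (hn : n < l),
      ((gridGraph 3 l).induce S).Reachable ⟨(r, ⟨0, hpos⟩), hr _⟩ ⟨(r, ⟨n, hn⟩), hr _⟩ := by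
    intro n
    induction n with
    | zero => intro hn; exact SimpleGraph.Reachable.refl _
    | succ m ih =>
      intro hn
      exact (ih (Nat.lt_of_succ_lt hn)).trans
        (SimpleGraph.Adj.reachable (induce_adj' (gg_adj_row r m hn)))
  have h1 := key j.val j.isLt
  have h2 := key j'.val j'.isLt
  simpa using h1.symm.trans h2

lemma preconn {l : ℕ} (S : Set (Fin 3 × Fin l)) (r : Fin 3)
    (hr : ∀ j, (r, j) ∈ S)
    (hS : ∀ v ∈ S, v = (r, v.2) ∨ (gridGraph 3 l).Adj v (r, v.2)) :
    ((gridGraph 3 l).induce S).Preconnected := by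
  have anchor : ∀ (v : S),
      ((gridGraph 3 l).induce S).Reachable v ⟨(r, v.val.2), hr _⟩ := by
    rintro ⟨v, hv⟩
    rcases hS v hv with h | h
    · have he : (⟨v, hv⟩ : S) = ⟨(r, v.2), hr _⟩ := Subtype.ext h
      rw [he]
    · exact SimpleGraph.Adj.reachable (induce_adj' h)
  rintro u v
  exact ((anchor u).trans (row_reach S r hr u.val.2 v.val.2)).trans (anchor v).symm

def colA {l : ℕ} (m : Fin l → Fin 2) : Fin 3 × Fin l → Fin 2 :=
  fun v => if v.1 = 0 then 0 else if v.1 = 2 then 1 else m v.2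

def colB {l : ℕ} : Fin 3 × Fin l → Fin 2 :=
  fun v => if v.1 = 0 then 1 else 0

lemma fin3_cases (i : Fin 3) : i = 0 ∨ i = 1 ∨ i = 2 := by omega

lemma colA_conn0 {l : ℕ} (m : Fin l → Fin 2) :
    ((gridGraph 3 l).induce (colA m ⁻¹' {0})).Preconnected := by
  apply preconn _ 0
  · intro j; simp [colA]
  · intro v hv
    rcases fin3_cases v.1 with h | h | h
    · left; rw [show v = (v.1, v.2) from rfl, h]
    · right; rw [show v = (v.1, v.2) from rfl, h]
      exact (gg_adj_col 0 1 v.2 rfl).symm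
    · exfalso
      simp only [Set.mem_preimage, Set.mem_singleton_iff, colA, h] at hv
      simp at hv

lemma colA_conn1 {l : ℕ} (m : Fin l → Fin 2) :
    ((gridGraph 3 l).induce (colA m ⁻¹' {1})).Preconnected := by
  apply preconn _ 2
  · intro j; simp [colA]
  · intro v hv
    rcases fin3_cases v.1 with h | h | h
    · exfalso
      simp only [Set.mem_preimage, Set.mem_singleton_iff, colA, h] at hv
      simp at hv
    · right; rw [show v = (v.1, v.2) from rfl, h]
      exact gg_adj_col 1 2 v.2 rfl
    · left; rw [show v = (v.1, v.2) from rfl, h]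

lemma colB_conn0 {l : ℕ} :
    ((gridGraph 3 l).induce (colB ⁻¹' {0})).Preconnected := by
  apply preconn _ 2
  · intro j; simp [colB]
  · intro v hv
    rcases fin3_cases v.1 with h | h | h
    · exfalso
      simp only [Set.mem_preimage, Set.mem_singleton_iff, colB, h] at hv
      simp at hv
    · right; rw [show v = (v.1, v.2) from rfl, h]
      exact gg_adj_col 1 2 v.2 rfl
    · left; rw [show v = (v.1, v.2) from rfl, h]

lemma colB_conn1 {l : ℕ} :
    ((gridGraph 3 l).induce (colB ⁻¹' {1})).Preconnected := by
  apply preconn _ 0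
  · intro j; simp [colB]
  · intro v hv
    rcases fin3_cases v.1 with h | h | h
    · left; rw [show v = (v.1, v.2) from rfl, h]
    all_goals
      exfalso
      simp only [Set.mem_preimage, Set.mem_singleton_iff, colB, h] at hv
      simp at hv

/-- The number of 2-colorings of the `3 × ℓ` grid graph in which both color classes
induce connected (possibly empty) subgraphs exceeds `2^ℓ`. -/
theorem grid_two_colorings_count (l : ℕ) (hl : 1 ≤ l) :
    2 ^ l < Nat.card {c : Fin 3 × Fin l → Fin 2 //
      ((gridGraph 3 l).induce (c ⁻¹' {0})).Preconnected ∧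
      ((gridGraph 3 l).induce (c ⁻¹' {1})).Preconnected} := by
  set T := {c : Fin 3 × Fin l → Fin 2 //
      ((gridGraph 3 l).induce (c ⁻¹' {0})).Preconnected ∧
      ((gridGraph 3 l).induce (c ⁻¹' {1})).Preconnected}
  let F : Option (Fin l → Fin 2) → T := fun o =>
    match o with
    | some m => ⟨colA m, colA_conn0 m, colA_conn1 m⟩
    | none => ⟨colB, colB_conn0, colB_conn1⟩
  have hF : Function.Injective F := by
    intro a b hab
    have hab' : (F a).val = (F b).val := congrArg Subtype.val hab
    match a, b with
    | some m, some m' =>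
      congr 1
      funext j
      have := congrFun hab' (1, j)
      simpa [F, colA] using this
    | some m, none =>
      exfalso
      have := congrFun hab' (0, ⟨0, hl⟩)
      simpa [F, colA, colB] using this
    | none, some m =>
      exfalso
      have := congrFun hab' (0, ⟨0, hl⟩)
      simpa [F, colA, colB] using this
    | none, none => rfl
  have hle : Nat.card (Option (Fin l → Fin 2)) ≤ Nat.card T :=
    Nat.card_le_card_of_injective F hF
  have hcard : Nat.card (Option (Fin l → Fin 2)) = 2 ^ l + 1 := by
    simp [Nat.card_eq_fintype_card]
  omega
end
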